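/- arXiv:2211.06582 — 9 statements merged into one kernel-verified Lean document; each statement's English description precedes it below -/
import Mathlib

section
/- Suppose n is even, k = n/2, and the randomized algorithm 𝒜 is ε-DP on size-k subsets of 𝒟. Then for every x* ∈ 𝒟 and every identification algorithm ℐ, the success probability P(ℐ(x*, 𝒜(D_train)) = y*) is at most 1/(1 + e^{−ε}); equivalently, 𝒜 is η-MIP with η = 1/(1 + e^{−ε}) − 1/2. -/
/-!
Take a size-`k` set `D ∋ x*` and a set `D' ∌ x*` adjacent to it. Applying `ε`-DP in both
directions, at every output `A` the adversary's gain `ℐ p + (1 - ℐ) q` is at most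
`max p q ≤ (p + q) / (1 + e^{-ε})`, so its total success on the pair is at most
`2 / (1 + e^{-ε})`. When `n = 2k`, adjacency is a `k`-biregular bipartite relation between the
sets containing `x*` and those avoiding it (swap `x*` for one of the `n - k = k` outside points,
resp. one of the `k` inside points for `x*`), so averaging the pair bound over its edges
bounds the average success.
-/

open Finset Real

section DoubleCounting

variable {R α β : Type*} [AddCommMonoid R] [LinearOrder R] [IsOrderedCancelAddMonoid R]

theorem Finset.sum_add_sum_le_card_nsmul_of_biregular (r : α → β → Prop)
    [∀ a b, Decidable (r a b)] {s : Finset α} {t : Finset β} {d : ℕ} (hd : d ≠ 0)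
    (hs : ∀ a ∈ s, #(t.bipartiteAbove r a) = d) (ht : ∀ b ∈ t, #(s.bipartiteBelow r b) = d)
    {f : α → R} {g : β → R} {C : R} (hfg : ∀ a ∈ s, ∀ b ∈ t, r a b → f a + g b ≤ C) :
    ∑ a ∈ s, f a + ∑ b ∈ t, g b ≤ #s • C := by
  rw [← nsmul_le_nsmul_iff_right hd]
  calc d • (∑ a ∈ s, f a + ∑ b ∈ t, g b)
      = ∑ a ∈ s, ∑ b ∈ t.bipartiteAbove r a, f a + ∑ b ∈ t, ∑ a ∈ s.bipartiteBelow r b, g b := by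
        rw [smul_add, smul_sum, smul_sum]
        congr 1
        · exact sum_congr rfl fun a ha => by rw [sum_const, hs a ha]
        · exact sum_congr rfl fun b hb => by rw [sum_const, ht b hb]
    _ = ∑ a ∈ s, ∑ b ∈ t.bipartiteAbove r a, (f a + g b) := by
        rw [sum_sum_bipartiteAbove_eq_sum_sum_bipartiteBelow r (fun _ b => g b) |>.symm]
        simp only [sum_add_distrib]
    _ ≤ ∑ a ∈ s, ∑ _b ∈ t.bipartiteAbove r a, C :=
        sum_le_sum fun a ha => sum_le_sum fun b hb =>
          hfg a ha b (mem_bipartiteAbove r |>.1 hb).1 (mem_bipartiteAbove r |>.1 hb).2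
    _ = d • (#s • C) := by
        rw [smul_comm, ← sum_const]
        exact sum_congr rfl fun a ha => by rw [sum_const, hs a ha]

end DoubleCounting

section Adjacency

variable {α : Type*} [DecidableEq α] {𝒟 D D' : Finset α} {k : ℕ} {x : α}

theorem Finset.card_inter_eq_card_sub_one_iff_erase_subset (hxD : x ∈ D) (hxD' : x ∉ D') :
    #(D ∩ D') = #D - 1 ↔ D.erase x ⊆ D' := by
  have hsub : D ∩ D' ⊆ D.erase x := fun a ha =>
    mem_erase.2 ⟨fun hax => hxD' (hax ▸ (mem_inter.1 ha).2), (mem_inter.1 ha).1⟩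
  rw [← card_erase_of_mem hxD]
  constructor
  · intro h
    rw [← eq_of_subset_of_card_le hsub h.ge]
    exact inter_subset_right
  · intro h
    exact congrArg card (subset_antisymm hsub fun a ha => mem_inter.2 ⟨mem_of_mem_erase ha, h ha⟩)

theorem Finset.card_filter_notMem_card_inter_eq (hD : D ∈ 𝒟.powersetCard k) (hxD : x ∈ D) :
    #{D' ∈ 𝒟.powersetCard k | x ∉ D' ∧ #(D ∩ D') = k - 1} = #𝒟 - k := by
  obtain ⟨hD𝒟, rfl⟩ := mem_powersetCard.1 hD
  have hcard : #(D.erase x) + 1 = #D := card_erase_add_one hxD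
  have himage : {D' ∈ 𝒟.powersetCard #D | x ∉ D' ∧ #(D ∩ D') = #D - 1}
      = (𝒟 \ D).image (insert · (D.erase x)) := by
    ext D'
    simp only [mem_filter, mem_powersetCard, mem_image, mem_sdiff]
    constructor
    · rintro ⟨⟨hD'𝒟, hD'⟩, hxD', hinter⟩
      obtain ⟨y, hy, rfl⟩ := exists_eq_insert_iff.2
        ⟨(card_inter_eq_card_sub_one_iff_erase_subset hxD hxD').1 hinter, hcard.trans hD'.symm⟩
      refine ⟨y, ⟨hD'𝒟 (mem_insert_self y _), fun hyD => hy (mem_erase.2 ⟨?_, hyD⟩)⟩, rfl⟩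
      rintro rfl
      exact hxD' (mem_insert_self _ _)
    · rintro ⟨y, ⟨hy𝒟, hyD⟩, rfl⟩
      have hy : y ∉ D.erase x := fun h => hyD (mem_of_mem_erase h)
      have hxD' : x ∉ insert y (D.erase x) := by
        rw [mem_insert, not_or]
        exact ⟨by rintro rfl; exact hyD hxD, notMem_erase x D⟩
      refine ⟨⟨insert_subset hy𝒟 ((erase_subset x D).trans hD𝒟), ?_⟩, hxD',
        (card_inter_eq_card_sub_one_iff_erase_subset hxD hxD').2 (subset_insert y _)⟩
      rw [card_insert_of_notMem hy, hcard]
  rw [himage, card_image_of_injOn, card_sdiff_of_subset hD𝒟]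
  intro y hy y' _ h
  exact (insert_inj fun h => (mem_sdiff.1 hy).2 (mem_of_mem_erase h)).1 h

theorem Finset.card_filter_mem_card_inter_eq (hk : k ≠ 0) (hx𝒟 : x ∈ 𝒟)
    (hD' : D' ∈ 𝒟.powersetCard k) (hxD' : x ∉ D') :
    #{D ∈ 𝒟.powersetCard k | x ∈ D ∧ #(D ∩ D') = k - 1} = k := by
  obtain ⟨hD'𝒟, rfl⟩ := mem_powersetCard.1 hD'
  have himage : {D ∈ 𝒟.powersetCard #D' | x ∈ D ∧ #(D ∩ D') = #D' - 1}
      = (D'.powersetCard (#D' - 1)).image (insert x) := by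
    ext D
    simp only [mem_filter, mem_powersetCard, mem_image]
    constructor
    · rintro ⟨⟨-, hD⟩, hxD, hinter⟩
      refine ⟨D.erase x, ⟨?_, ?_⟩, insert_erase hxD⟩
      · rw [← hD] at hinter
        exact (card_inter_eq_card_sub_one_iff_erase_subset hxD hxD').1 hinter
      · rw [card_erase_of_mem hxD, hD]
    · rintro ⟨E, ⟨hED', hE⟩, rfl⟩
      have hxE : x ∉ E := fun h => hxD' (hED' h)
      have hcard : #(insert x E) = #D' := by rw [card_insert_of_notMem hxE, hE]; omega
      refine ⟨⟨insert_subset hx𝒟 (hED'.trans hD'𝒟), hcard⟩, mem_insert_self x E, ?_⟩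
      rw [← hcard, card_inter_eq_card_sub_one_iff_erase_subset (mem_insert_self x E) hxD',
        erase_insert hxE]
      exact hED'
  rw [himage, card_image_of_injOn, card_powersetCard, Nat.choose_symm_of_eq_add,
    Nat.choose_one_right]
  · omega
  · intro E hE E' hE' h
    have hxE : ∀ E ∈ (D'.powersetCard (#D' - 1) : Set (Finset α)), x ∉ E :=
      fun E hE hx => hxD' ((mem_powersetCard.1 hE).1 hx)
    rw [← erase_insert (hxE E hE), ← erase_insert (hxE E' hE')]
    exact congrArg (erase · x) h

end Adjacency

theorem Real.max_le_add_div_one_add_exp_neg {p q ε : ℝ} (hpq : p ≤ exp ε * q)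
    (hqp : q ≤ exp ε * p) : max p q ≤ (p + q) / (1 + exp (-ε)) := by
  have scale {a b : ℝ} (h : a ≤ exp ε * b) : exp (-ε) * a ≤ b := by
    calc exp (-ε) * a ≤ exp (-ε) * (exp ε * b) := by gcongr
      _ = b := by rw [← mul_assoc, ← exp_add, neg_add_cancel, exp_zero, one_mul]
  rw [le_div_iff₀ (by positivity)]
  rcases le_total p q with h | h
  · rw [max_eq_right h]
    linarith [scale hqp]
  · rw [max_eq_left h]
    linarith [scale hpq]

theorem Finset.sum_mul_add_sum_mul_one_sub_le {ι : Type*} (s : Finset ι) {p q t : ι → ℝ} {ε : ℝ}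
    (hpq : ∀ i ∈ s, p i ≤ exp ε * q i) (hqp : ∀ i ∈ s, q i ≤ exp ε * p i)
    (ht : ∀ i ∈ s, t i ∈ Set.Icc (0 : ℝ) 1) :
    ∑ i ∈ s, p i * t i + ∑ i ∈ s, q i * (1 - t i) ≤
      (∑ i ∈ s, p i + ∑ i ∈ s, q i) / (1 + exp (-ε)) := by
  rw [← sum_add_distrib, ← sum_add_distrib, sum_div]
  refine sum_le_sum fun i hi => ?_
  obtain ⟨ht0, ht1⟩ := ht i hi
  calc p i * t i + q i * (1 - t i) ≤ max (p i) (q i) := by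
        nlinarith [le_max_left (p i) (q i), le_max_right (p i) (q i)]
    _ ≤ (p i + q i) / (1 + exp (-ε)) := max_le_add_div_one_add_exp_neg (hpq i hi) (hqp i hi)

theorem statement_3_general {α 𝔸 : Type*} [DecidableEq α] [Fintype 𝔸]
    (n k : ℕ) (hev : Even n) (hk : k = n / 2)
    (𝒟 : Finset α) (hcard : 𝒟.card = n)
    (ε : ℝ)
    (𝒜 : Finset α → 𝔸 → ℝ)
    (h𝒜1 : ∀ D ∈ 𝒟.powersetCard k, ∑ A, 𝒜 D A = 1)
    (hDP : ∀ D ∈ 𝒟.powersetCard k, ∀ D' ∈ 𝒟.powersetCard k,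
      (D ∩ D').card = k - 1 → ∀ A, 𝒜 D A ≤ Real.exp ε * 𝒜 D' A)
    (x : α) (hx : x ∈ 𝒟)
    (ℐ : 𝔸 → ℝ) (hℐ : ∀ A, ℐ A ∈ Set.Icc (0 : ℝ) 1) :
    ((𝒟.powersetCard k).card : ℝ)⁻¹ *
        ∑ D ∈ 𝒟.powersetCard k, ∑ A, 𝒜 D A * (if x ∈ D then ℐ A else 1 - ℐ A) ≤
      1 / (1 + Real.exp (-ε)) := by
  have h𝒟 : #𝒟 ≠ 0 := card_ne_zero_of_mem hx
  obtain ⟨m, rfl⟩ := hev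
  have hk0 : k ≠ 0 := by omega
  have hcompl : #𝒟 - k = k := by omega
  set P := 𝒟.powersetCard k
  set P₁ := {D ∈ P | x ∈ D}
  set P₀ := {D ∈ P | x ∉ D}
  let adj (D D' : Finset α) : Prop := #(D ∩ D') = k - 1
  have hrow : ∀ D ∈ P₁, #(P₀.bipartiteAbove adj D) = k := fun D hD => by
    rw [bipartiteAbove, filter_filter]
    exact (card_filter_notMem_card_inter_eq (mem_filter.1 hD).1 (mem_filter.1 hD).2).trans hcompl
  have hcol : ∀ D' ∈ P₀, #(P₁.bipartiteBelow adj D') = k := fun D' hD' => by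
    rw [bipartiteBelow, filter_filter]
    exact card_filter_mem_card_inter_eq hk0 hx (mem_filter.1 hD').1 (mem_filter.1 hD').2
  have hP₁P₀ : #P₁ = #P₀ :=
    Nat.eq_of_mul_eq_mul_right (Nat.pos_of_ne_zero hk0) (card_mul_eq_card_mul adj hrow hcol)
  have hpair : ∀ D ∈ P₁, ∀ D' ∈ P₀, adj D D' →
      ∑ A, 𝒜 D A * ℐ A + ∑ A, 𝒜 D' A * (1 - ℐ A) ≤ 2 / (1 + exp (-ε)) := by
    intro D hD D' hD' hadj
    have hD := (mem_filter.1 hD).1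
    have hD' := (mem_filter.1 hD').1
    have hsum := sum_mul_add_sum_mul_one_sub_le univ (fun A _ => hDP D hD D' hD' hadj A)
      (fun A _ => hDP D' hD' D hD (by rwa [inter_comm]) A) (fun A _ => hℐ A)
    rwa [h𝒜1 D hD, h𝒜1 D' hD', one_add_one_eq_two] at hsum
  have hsplit : ∑ D ∈ P, ∑ A, 𝒜 D A * (if x ∈ D then ℐ A else 1 - ℐ A)
      = ∑ D ∈ P₁, ∑ A, 𝒜 D A * ℐ A + ∑ D ∈ P₀, ∑ A, 𝒜 D A * (1 - ℐ A) := by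
    rw [← sum_filter_add_sum_filter_not P (x ∈ ·)]
    congr 1 <;> refine sum_congr rfl fun D hD => ?_ <;>
      simp only [(mem_filter.1 hD).2, if_true, if_false]
  have hP : (#P : ℝ) = #P₁ + #P₀ := by exact_mod_cast (card_filter_add_card_filter_not _).symm
  have hPpos : (0 : ℝ) < #P := by exact_mod_cast (powersetCard_nonempty.2 (by omega)).card_pos
  rw [hsplit, inv_mul_le_iff₀ hPpos, hP, ← hP₁P₀]
  calc _ ≤ #P₁ • (2 / (1 + exp (-ε))) :=
        sum_add_sum_le_card_nsmul_of_biregular adj hk0 hrow hcol hpair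
    _ = _ := by rw [nsmul_eq_mul]; ring

/-- if `n` is even, `k = n/2`, and `𝒜` is `ε`-DP on size-`k`
subsets of `𝒟` (for adjacent subsets, i.e. size-`k` subsets sharing `k - 1`
elements, all output probabilities differ by a factor of at most `e^ε`), then
for every target `x* ∈ 𝒟` and every adversary `ℐ`, the success probability is
at most `1/(1 + e^{-ε})`; equivalently `𝒜` is `η`-MIP with
`η = 1/(1 + e^{-ε}) - 1/2`. -/
theorem statement_3 {α 𝔸 : Type*} [DecidableEq α] [Fintype 𝔸]
    (n k : ℕ) (hn : 2 ≤ n) (hev : Even n) (hk : k = n / 2)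
    (𝒟 : Finset α) (hcard : 𝒟.card = n)
    (ε : ℝ)
    (𝒜 : Finset α → 𝔸 → ℝ)
    (h𝒜0 : ∀ D A, 0 ≤ 𝒜 D A)
    (h𝒜1 : ∀ D ∈ 𝒟.powersetCard k, ∑ A, 𝒜 D A = 1)
    (hDP : ∀ D ∈ 𝒟.powersetCard k, ∀ D' ∈ 𝒟.powersetCard k,
      (D ∩ D').card = k - 1 → ∀ A, 𝒜 D A ≤ Real.exp ε * 𝒜 D' A)
    (x : α) (hx : x ∈ 𝒟)
    (ℐ : 𝔸 → ℝ) (hℐ : ∀ A, ℐ A ∈ Set.Icc (0 : ℝ) 1) :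
    ((𝒟.powersetCard k).card : ℝ)⁻¹ *
        ∑ D ∈ 𝒟.powersetCard k, ∑ A, 𝒜 D A * (if x ∈ D then ℐ A else 1 - ℐ A) ≤
      1 / (1 + Real.exp (-ε)) :=
  statement_3_general n k hev hk 𝒟 hcard ε 𝒜 h𝒜1 hDP x hx ℐ hℐ
end

section
/- The bound of the previous theorem is tight: for every ε > 0 there exist a finite dataset 𝒟 (one may take 𝒟 = {0,1}, n = 2, k = 1), a finite output set 𝔸, a randomized algorithm 𝒜 on size-k subsets of 𝒟 that is ε-DP, a point x* ∈ 𝒟, and an identification algorithm ℐ whose success probability P(ℐ(x*, 𝒜(D_train)) = y*) equals exactly 1/(1 + e^{−ε}). -/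
/-- tightness of the DP ⟹ MIP bound: for every `ε > 0` there
exist a finite dataset `𝒟` (one may take `𝒟 = {0,1}`, `n = 2`, `k = 1`), a
finite output set `𝔸` (here a finite set of naturals), a randomized algorithm
`𝒜` on size-`k` subsets of `𝒟` that is `ε`-DP, a point `x* ∈ 𝒟`, and an
identification algorithm `ℐ` whose success probability is exactly
`1/(1 + e^{-ε})`. -/
theorem statement_4 (ε : ℝ) (hε : 0 < ε) :
    ∃ (𝒟 : Finset ℕ) (k : ℕ) (𝔸 : Finset ℕ) (𝒜 : Finset ℕ → ℕ → ℝ)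
      (x : ℕ) (ℐ : ℕ → ℝ),
      𝒟 = {0, 1} ∧ k = 1 ∧ x ∈ 𝒟 ∧
      (∀ D A, 0 ≤ 𝒜 D A) ∧
      (∀ D ∈ 𝒟.powersetCard k, ∑ A ∈ 𝔸, 𝒜 D A = 1) ∧
      (∀ D ∈ 𝒟.powersetCard k, ∀ D' ∈ 𝒟.powersetCard k,
        (D ∩ D').card = k - 1 → ∀ A ∈ 𝔸, 𝒜 D A ≤ Real.exp ε * 𝒜 D' A) ∧
      (∀ A, ℐ A ∈ Set.Icc (0 : ℝ) 1) ∧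
      ((𝒟.powersetCard k).card : ℝ)⁻¹ *
          (∑ D ∈ 𝒟.powersetCard k, ∑ A ∈ 𝔸, 𝒜 D A * (if x ∈ D then ℐ A else 1 - ℐ A))
        = 1 / (1 + Real.exp (-ε)) := by
  set E := Real.exp ε with hE
  have hEpos : 0 < E := Real.exp_pos ε
  have hE1 : (1:ℝ) ≤ E := by
    rw [hE]; simpa using Real.one_le_exp hε.le
  have hden : (0:ℝ) < 1 + E := by linarith
  refine ⟨{0,1}, 1, {0,1},
    fun D A => if (0 ∈ D ↔ A = 0) then E / (1 + E) else 1 / (1 + E),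
    0, fun A => if A = 0 then 1 else 0, rfl, rfl, by decide, ?_, ?_, ?_, ?_, ?_⟩
  · intro D A
    by_cases h : (0 ∈ D ↔ A = 0) <;> simp [h] <;> positivity
  · intro D _
    by_cases h : 0 ∈ D <;>
      simp [h, Finset.sum_insert, Finset.mem_singleton] <;> field_simp <;> ring
  · intro D _ D' _ _ A _
    have hI : (0:ℝ) ≤ (1 + E)⁻¹ := inv_nonneg.2 hden.le
    by_cases h : (0 ∈ D ↔ A = 0) <;> by_cases h' : (0 ∈ D' ↔ A = 0) <;>
      simp [h, h', ← hE, div_eq_mul_inv] <;>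
      nlinarith [mul_nonneg (sub_nonneg.2 hE1) hI,
        mul_nonneg (mul_nonneg (sub_nonneg.2 hE1) hEpos.le) hI,
        mul_nonneg (mul_nonneg (sub_nonneg.2 hE1) (by linarith : (0:ℝ) ≤ E + 1)) hI]
  · intro A
    by_cases h : A = 0 <;> simp [h]
  · have hps : ({0,1} : Finset ℕ).powersetCard 1 = {{0},{1}} := by decide
    rw [hps]
    have hne : ({0} : Finset ℕ) ≠ {1} := by decide
    rw [Finset.sum_insert (by simpa using hne), Finset.sum_singleton,
      Finset.card_insert_of_notMem (by simpa using hne), Finset.card_singleton]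
    simp only [Finset.mem_insert, Finset.mem_singleton]
    rw [Finset.sum_insert (by simp), Finset.sum_singleton,
        Finset.sum_insert (by simp), Finset.sum_singleton]
    norm_num
    rw [Real.exp_neg, ← hE]
    have hEne : E ≠ 0 := hEpos.ne'
    have hdne : (1 + E) ≠ 0 := hden.ne'
    field_simp
    ring
end

section
/- If the randomized algorithm 𝒜 is ε-DP on size-k subsets of 𝒟, then for every x* ∈ 𝒟 and every output A ∈ 𝔸, the joint probabilities satisfy k · P(x* ∉ D_train and 𝒜(D_train) = A) ≤ e^ε · (n − k) · P(x* ∈ D_train and 𝒜(D_train) = A). Equivalently, whenever P(𝒜(D_train) = A) > 0, the posterior odds satisfy P(x* ∉ D_train | 𝒜(D_train) = A) / P(x* ∈ D_train | 𝒜(D_train) = A) ≤ e^ε · P(x* ∉ D_train) / P(x* ∈ D_train) = e^ε · (n−k)/k. -/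
/-!
Trading an element `y` of a training set `D ∌ x*` for `x*` gives an adjacent set containing
`x*`. Summing the DP inequality over all such trades, each set without `x*` is counted `k` times
(once per `y ∈ D`) and each set with `x*` is counted `n - k` times (once per `y ∈ 𝒟 \ D`),
which gives `k · P(x* ∉ D_train, A) ≤ e^ε (n - k) · P(x* ∈ D_train, A)`.
-/

/-- Joint probability `P(x ∈ D_train ∧ 𝒜(D_train) = A)` for a uniform size-`k`
training subset of `𝒟`. -/
noncomputable def jointIn {α 𝔸 : Type*} [DecidableEq α]
    (𝒟 : Finset α) (k : ℕ) (𝒜 : Finset α → 𝔸 → ℝ) (x : α) (A : 𝔸) : ℝ :=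
  ((𝒟.powersetCard k).card : ℝ)⁻¹ *
    ∑ D ∈ (𝒟.powersetCard k).filter (fun D => x ∈ D), 𝒜 D A

/-- Joint probability `P(x ∉ D_train ∧ 𝒜(D_train) = A)`. -/
noncomputable def jointOut {α 𝔸 : Type*} [DecidableEq α]
    (𝒟 : Finset α) (k : ℕ) (𝒜 : Finset α → 𝔸 → ℝ) (x : α) (A : 𝔸) : ℝ :=
  ((𝒟.powersetCard k).card : ℝ)⁻¹ *
    ∑ D ∈ (𝒟.powersetCard k).filter (fun D => x ∉ D), 𝒜 D A

namespace Finset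

variable {α : Type*} [DecidableEq α] {𝒟 D : Finset α} {a b : α} {k : ℕ}

theorem insert_erase_mem_powersetCard (ha : a ∈ 𝒟) (haD : a ∉ D) (hb : b ∈ D)
    (hD : D ∈ 𝒟.powersetCard k) : insert a (D.erase b) ∈ 𝒟.powersetCard k := by
  rw [mem_powersetCard] at hD ⊢
  refine ⟨insert_subset ha ((erase_subset b D).trans hD.1), ?_⟩
  rw [card_insert_of_notMem (fun h => haD (mem_of_mem_erase h)), card_erase_add_one hb, hD.2]

theorem insert_erase_insert_erase (haD : a ∉ D) (hb : b ∈ D) :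
    insert b ((insert a (D.erase b)).erase a) = D := by
  rw [erase_insert (fun h => haD (mem_of_mem_erase h)), insert_erase hb]

theorem card_inter_insert_erase (haD : a ∉ D) (hb : b ∈ D) :
    (D ∩ insert a (D.erase b)).card = D.card - 1 := by
  rw [inter_insert_of_notMem haD, inter_eq_right.mpr (erase_subset b D), card_erase_of_mem hb]

theorem sum_sum_insert_erase_eq_sum_sum_sdiff {β : Type*} [AddCommMonoid β] {x : α}
    (hx : x ∈ 𝒟) (f : Finset α → β) :
    ∑ D ∈ (𝒟.powersetCard k).filter (fun D => x ∉ D), ∑ y ∈ D, f (insert x (D.erase y)) =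
      ∑ D ∈ (𝒟.powersetCard k).filter (fun D => x ∈ D), ∑ _z ∈ 𝒟 \ D, f D := by
  rw [sum_sigma', sum_sigma']
  refine sum_bij' (fun p _ => ⟨insert x (p.1.erase p.2), p.2⟩)
    (fun q _ => ⟨insert q.2 (q.1.erase x), q.2⟩) ?_ ?_ ?_ ?_ (fun _ _ => rfl)
  · rintro ⟨D, y⟩ hp
    simp only [mem_sigma, mem_filter, mem_sdiff] at hp ⊢
    obtain ⟨⟨hD, hxD⟩, hy⟩ := hp
    refine ⟨⟨insert_erase_mem_powersetCard hx hxD hy hD, mem_insert_self _ _⟩,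
      (mem_powersetCard.mp hD).1 hy, ?_⟩
    rw [mem_insert, not_or]
    exact ⟨fun h => hxD (h ▸ hy), notMem_erase y D⟩
  · rintro ⟨D, z⟩ hq
    simp only [mem_sigma, mem_filter, mem_sdiff] at hq ⊢
    obtain ⟨⟨hD, hxD⟩, hz, hzD⟩ := hq
    refine ⟨⟨insert_erase_mem_powersetCard hz hzD hxD hD, ?_⟩, mem_insert_self _ _⟩
    rw [mem_insert, not_or]
    exact ⟨fun h => hzD (h ▸ hxD), notMem_erase x D⟩
  · rintro ⟨D, y⟩ hp
    simp only [mem_sigma, mem_filter] at hp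
    simp only [insert_erase_insert_erase hp.1.2 hp.2]
  · rintro ⟨D, z⟩ hq
    simp only [mem_sigma, mem_filter, mem_sdiff] at hq
    simp only [insert_erase_insert_erase hq.2.2 hq.1.2]

end Finset

section DifferentialPrivacy

open Finset

variable {α 𝔸 : Type*} [DecidableEq α]

/-- `ε`-DP of `𝒜` on size-`k` subsets of `𝒟`; `(D ∩ D').card = k - 1` says that `D` and `D'`
are adjacent. -/
def IsDP (𝒟 : Finset α) (k : ℕ) (ε : ℝ) (𝒜 : Finset α → 𝔸 → ℝ) : Prop :=
  ∀ D ∈ 𝒟.powersetCard k, ∀ D' ∈ 𝒟.powersetCard k,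
    (D ∩ D').card = k - 1 → ∀ A, 𝒜 D A ≤ Real.exp ε * 𝒜 D' A

namespace IsDP

variable {𝒟 : Finset α} {k : ℕ} {ε : ℝ} {𝒜 : Finset α → 𝔸 → ℝ} {x : α}

theorem card_mul_sum_notMem_le (h𝒜 : IsDP 𝒟 k ε 𝒜) (hx : x ∈ 𝒟) (A : 𝔸) :
    (k : ℝ) * ∑ D ∈ (𝒟.powersetCard k).filter (fun D => x ∉ D), 𝒜 D A ≤
      Real.exp ε * ((𝒟.card : ℝ) - k) *
        ∑ D ∈ (𝒟.powersetCard k).filter (fun D => x ∈ D), 𝒜 D A := by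
  have hswap : ∀ D ∈ (𝒟.powersetCard k).filter (fun D => x ∉ D), ∀ y ∈ D,
      𝒜 D A ≤ Real.exp ε * 𝒜 (insert x (D.erase y)) A := by
    intro D hD y hy
    rw [mem_filter] at hD
    refine h𝒜 D hD.1 _ (insert_erase_mem_powersetCard hx hD.2 hy hD.1) ?_ A
    rw [card_inter_insert_erase hD.2 hy, (mem_powersetCard.mp hD.1).2]
  have hcard_sdiff : ∀ D ∈ (𝒟.powersetCard k).filter (fun D => x ∈ D),
      ((𝒟 \ D).card : ℝ) = (𝒟.card : ℝ) - k := by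
    intro D hD
    obtain ⟨hD𝒟, hDk⟩ := mem_powersetCard.mp (mem_filter.mp hD).1
    rw [card_sdiff_of_subset hD𝒟, Nat.cast_sub (card_le_card hD𝒟), hDk]
  calc (k : ℝ) * ∑ D ∈ (𝒟.powersetCard k).filter (fun D => x ∉ D), 𝒜 D A
      = ∑ D ∈ (𝒟.powersetCard k).filter (fun D => x ∉ D), ∑ _y ∈ D, 𝒜 D A := by
        rw [mul_sum]
        refine sum_congr rfl fun D hD => ?_
        rw [sum_const, nsmul_eq_mul, (mem_powersetCard.mp (mem_filter.mp hD).1).2]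
    _ ≤ ∑ D ∈ (𝒟.powersetCard k).filter (fun D => x ∉ D),
          ∑ y ∈ D, Real.exp ε * 𝒜 (insert x (D.erase y)) A :=
        sum_le_sum fun D hD => sum_le_sum fun y hy => hswap D hD y hy
    _ = Real.exp ε * ∑ D ∈ (𝒟.powersetCard k).filter (fun D => x ∈ D),
          ∑ _z ∈ 𝒟 \ D, 𝒜 D A := by
        simp only [← mul_sum]
        exact congrArg _ (sum_sum_insert_erase_eq_sum_sum_sdiff hx (𝒜 · A))
    _ = Real.exp ε * ((𝒟.card : ℝ) - k) *
          ∑ D ∈ (𝒟.powersetCard k).filter (fun D => x ∈ D), 𝒜 D A := by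
        rw [mul_assoc]
        congr 1
        rw [mul_sum]
        refine sum_congr rfl fun D hD => ?_
        rw [sum_const, nsmul_eq_mul, hcard_sdiff D hD]

theorem mul_jointOut_le (h𝒜 : IsDP 𝒟 k ε 𝒜) (hx : x ∈ 𝒟) (A : 𝔸) :
    (k : ℝ) * jointOut 𝒟 k 𝒜 x A ≤
      Real.exp ε * ((𝒟.card : ℝ) - k) * jointIn 𝒟 k 𝒜 x A := by
  unfold jointOut jointIn
  rw [mul_left_comm, mul_left_comm _ (_⁻¹)]
  exact mul_le_mul_of_nonneg_left (h𝒜.card_mul_sum_notMem_le hx A) (by positivity)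

end IsDP

theorem jointIn_nonneg {𝒟 : Finset α} {k : ℕ} {𝒜 : Finset α → 𝔸 → ℝ}
    (h𝒜 : ∀ D A, 0 ≤ 𝒜 D A) (x : α) (A : 𝔸) : 0 ≤ jointIn 𝒟 k 𝒜 x A :=
  mul_nonneg (by positivity) (sum_nonneg fun D _ => h𝒜 D A)

theorem div_le_div_of_mul_le_mul {a b c d : ℝ} (hd : 0 < d) (hb : 0 ≤ b) (hab : 0 < a + b)
    (h : d * a ≤ c * b) : a / b ≤ c / d := by
  have hb' : 0 < b := by
    refine hb.lt_of_ne fun hb0 => ?_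
    subst hb0
    nlinarith
  rw [div_le_div_iff₀ hb' hd]
  linarith

end DifferentialPrivacy

theorem statement_7_general {α 𝔸 : Type*} [DecidableEq α]
    (n k : ℕ) (hk1 : 1 ≤ k)
    (𝒟 : Finset α) (hcard : 𝒟.card = n)
    (ε : ℝ)
    (𝒜 : Finset α → 𝔸 → ℝ)
    (h𝒜0 : ∀ D A, 0 ≤ 𝒜 D A)
    (hDP : ∀ D ∈ 𝒟.powersetCard k, ∀ D' ∈ 𝒟.powersetCard k,
      (D ∩ D').card = k - 1 → ∀ A, 𝒜 D A ≤ Real.exp ε * 𝒜 D' A)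
    (x : α) (hx : x ∈ 𝒟) (A : 𝔸) :
    (k : ℝ) * jointOut 𝒟 k 𝒜 x A ≤
        Real.exp ε * ((n : ℝ) - k) * jointIn 𝒟 k 𝒜 x A ∧
      (0 < jointIn 𝒟 k 𝒜 x A + jointOut 𝒟 k 𝒜 x A →
        jointOut 𝒟 k 𝒜 x A / jointIn 𝒟 k 𝒜 x A ≤
          Real.exp ε * (((n : ℝ) - k) / k)) := by
  have hjoint := IsDP.mul_jointOut_le (ε := ε) hDP hx A
  rw [hcard] at hjoint
  refine ⟨hjoint, fun hpos => ?_⟩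
  rw [← mul_div_assoc]
  exact div_le_div_of_mul_le_mul (by exact_mod_cast hk1) (jointIn_nonneg h𝒜0 x A)
    (by linarith) (by linarith)

/-- if `𝒜` is `ε`-DP on size-`k` subsets of `𝒟` then for every
`x* ∈ 𝒟` and every output `A`,
`k · P(x* ∉ D_train ∧ 𝒜 = A) ≤ e^ε · (n - k) · P(x* ∈ D_train ∧ 𝒜 = A)`;
equivalently, whenever `P(𝒜(D_train) = A) > 0`, the posterior odds satisfy
`P(x* ∉ D_train | A) / P(x* ∈ D_train | A) ≤ e^ε · (n - k)/k`. -/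
theorem statement_7 {α 𝔸 : Type*} [DecidableEq α] [Fintype 𝔸]
    (n k : ℕ) (hn : 2 ≤ n) (hk1 : 1 ≤ k) (hk2 : k ≤ n - 1)
    (𝒟 : Finset α) (hcard : 𝒟.card = n)
    (ε : ℝ)
    (𝒜 : Finset α → 𝔸 → ℝ)
    (h𝒜0 : ∀ D A, 0 ≤ 𝒜 D A)
    (h𝒜1 : ∀ D ∈ 𝒟.powersetCard k, ∑ A, 𝒜 D A = 1)
    (hDP : ∀ D ∈ 𝒟.powersetCard k, ∀ D' ∈ 𝒟.powersetCard k,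
      (D ∩ D').card = k - 1 → ∀ A, 𝒜 D A ≤ Real.exp ε * 𝒜 D' A)
    (x : α) (hx : x ∈ 𝒟) (A : 𝔸) :
    (k : ℝ) * jointOut 𝒟 k 𝒜 x A ≤
        Real.exp ε * ((n : ℝ) - k) * jointIn 𝒟 k 𝒜 x A ∧
      (0 < jointIn 𝒟 k 𝒜 x A + jointOut 𝒟 k 𝒜 x A →
        jointOut 𝒟 k 𝒜 x A / jointIn 𝒟 k 𝒜 x A ≤
          Real.exp ε * (((n : ℝ) - k) / k)) :=
  statement_7_general n k hk1 𝒟 hcard ε 𝒜 h𝒜0 hDP x hx A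
end

section
/- Let M ≥ 1, 0 < η ≤ 1/2, and set c = (7.5/η)^{1 + 2/M}. Let ‖·‖ be any norm on ℝ^d, let a_1, …, a_N, b_1, …, b_N ∈ ℝ^d, let Z be uniformly distributed over the list (a_1, …, a_N, b_1, …, b_N), and suppose σ > 0 satisfies E‖Z − EZ‖^M ≤ σ^M. Let X be a random vector in ℝ^d whose law has density proportional to exp(−‖x‖/(cσ)) with respect to Lebesgue measure. Then for every measurable randomized classifier g : ℝ^d → [0,1], (1/(2N)) Σ_{i=1}^N E[g(a_i + X)] + (1/(2N)) Σ_{j=1}^N E[1 − g(b_j + X)] ≤ 1/2 + η. -/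
/-!
With `s = cσ`, the noise density `f v ∝ exp (-‖v‖ / s)` satisfies
`f (w - x) ≤ exp (‖x - y‖ / s) * f (w - y)` by the triangle inequality, so the acceptance
probability `G x = E g (x + X)` satisfies `G x ≤ exp (‖x - y‖ / s) * G y`; as `G ≤ 1` this gives
`G x - G y ≤ ‖x - y‖ / s`. Comparing every `a i` and `b j` with the mean `m` of the list bounds
the advantage `(Σ G (a i) - Σ G (b j)) / 2N` by `E‖Z - m‖ / s`, which is at most `σ / s = 1 / c`
by Jensen's inequality for the `M`-th moment, and `1 / c ≤ η`.
-/

open MeasureTheory Real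
open scoped ENNReal

theorem sub_le_of_le_exp_mul {a b t : ℝ} (ha : a ≤ 1) (ht : 0 ≤ t)
    (h : a ≤ exp t * b) : a - b ≤ t := by
  have hb : exp (-t) * a ≤ b := by
    rw [exp_neg, inv_mul_le_iff₀ (exp_pos t)]; exact h
  have hgap : 0 ≤ 1 - exp (-t) := sub_nonneg.2 (exp_le_one_iff.2 (neg_nonpos.2 ht))
  calc a - b ≤ a * (1 - exp (-t)) := by linarith
    _ ≤ 1 * (1 - exp (-t)) := by gcongr
    _ ≤ t := by linarith [add_one_le_exp (-t)]

section Translation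

variable {E : Type*} [AddGroup E] [MeasurableSpace E] [MeasurableAdd E]
  {ν : Measure E} [ν.IsAddLeftInvariant] {f h : E → ℝ≥0∞}

theorem lintegral_withDensity_comp_add_left (hf : Measurable f) (hh : Measurable h) (x : E) :
    ∫⁻ v, h (x + v) ∂ν.withDensity f = ∫⁻ w, f (-x + w) * h w ∂ν := by
  refine (lintegral_withDensity_eq_lintegral_mul ν hf (hh.comp (measurable_const_add x))).trans ?_
  rw [← lintegral_add_left_eq_self _ (-x)]
  simp only [Pi.mul_apply, Function.comp_apply, add_neg_cancel_left]

theorem lintegral_withDensity_comp_add_left_le (hf : Measurable f) (hh : Measurable h)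
    {x y : E} {C : ℝ≥0∞} (hC : ∀ w, f (-x + w) ≤ C * f (-y + w)) :
    ∫⁻ v, h (x + v) ∂ν.withDensity f ≤ C * ∫⁻ v, h (y + v) ∂ν.withDensity f := by
  have hm : Measurable fun w => f (-y + w) * h w := by fun_prop
  rw [lintegral_withDensity_comp_add_left hf hh, lintegral_withDensity_comp_add_left hf hh,
    ← lintegral_const_mul C hm]
  refine lintegral_mono fun w => ?_
  rw [← mul_assoc]
  exact mul_le_mul_left (hC w) (h w)

theorem integral_withDensity_comp_add_left_sub_le [IsProbabilityMeasure (ν.withDensity f)]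
    (hf : Measurable f) {g : E → ℝ} (hg : Measurable g) (hg01 : ∀ v, g v ∈ Set.Icc 0 1)
    {x y : E} {t : ℝ} (ht : 0 ≤ t) (hC : ∀ w, f (-x + w) ≤ ENNReal.ofReal (exp t) * f (-y + w)) :
    ∫ v, g (x + v) ∂ν.withDensity f - ∫ v, g (y + v) ∂ν.withDensity f ≤ t := by
  set μ := ν.withDensity f
  have hrepr (z : E) : ∫ v, g (z + v) ∂μ = (∫⁻ v, ENNReal.ofReal (g (z + v)) ∂μ).toReal :=
    integral_eq_lintegral_of_nonneg_ae (ae_of_all _ fun v => (hg01 _).1)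
      (hg.comp (measurable_const_add z)).aestronglyMeasurable
  have hle_one (z : E) : ∫⁻ v, ENNReal.ofReal (g (z + v)) ∂μ ≤ 1 :=
    (lintegral_mono fun v => ENNReal.ofReal_le_one.2 (hg01 _).2).trans (by simp)
  refine sub_le_of_le_exp_mul ?_ ht ?_
  · rw [hrepr]
    exact ENNReal.toReal_le_of_le_ofReal zero_le_one (by simpa using hle_one x)
  · rw [hrepr, hrepr, ← ENNReal.toReal_ofReal (exp_pos t).le, ← ENNReal.toReal_mul]
    exact ENNReal.toReal_mono
      (ENNReal.mul_ne_top ENNReal.ofReal_ne_top ((hle_one y).trans_lt ENNReal.one_lt_top).ne)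
      (lintegral_withDensity_comp_add_left_le hf hg.ennreal_ofReal hC)

end Translation

theorem Seminorm.ofReal_mul_exp_neg_div_le {E : Type*} [AddCommGroup E] [Module ℝ E]
    (p : Seminorm ℝ E) (K : ℝ) {s : ℝ} (hs : 0 < s) (x y w : E) :
    ENNReal.ofReal (K * exp (-p (-x + w) / s)) ≤
      ENNReal.ofReal (exp (p (x - y) / s)) * ENNReal.ofReal (K * exp (-p (-y + w) / s)) := by
  rw [ENNReal.ofReal_mul' (exp_pos _).le, ENNReal.ofReal_mul' (exp_pos _).le, mul_left_comm,
    ← ENNReal.ofReal_mul (exp_pos _).le, ← exp_add]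
  gcongr
  have := map_add_le_add p (-x + w) (x - y)
  rw [show -x + w + (x - y) = -y + w by abel] at this
  rw [← add_div, div_le_div_iff_of_pos_right hs]
  linarith

theorem Finset.sum_mul_le_of_sum_mul_rpow_le {ι : Type*} (s : Finset ι) {w z : ι → ℝ}
    (hw : ∀ i ∈ s, 0 ≤ w i) (hw' : ∑ i ∈ s, w i = 1) (hz : ∀ i ∈ s, 0 ≤ z i) {M σ : ℝ}
    (hM : 1 ≤ M) (hσ : 0 ≤ σ) (h : ∑ i ∈ s, w i * z i ^ M ≤ σ ^ M) :
    ∑ i ∈ s, w i * z i ≤ σ := by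
  refine (rpow_le_rpow_iff (Finset.sum_nonneg fun i hi => mul_nonneg (hw i hi) (hz i hi)) hσ
    (by linarith : 0 < M)).1 ?_
  exact (Real.rpow_arith_mean_le_arith_mean_rpow s w z hw hw' hz hM).trans h

theorem Finset.sum_sub_sum_le_of_sub_le {ι E : Type*} [Fintype ι] [Sub E] (G q : E → ℝ)
    (hG : ∀ x y, G x - G y ≤ q (x - y)) (a b : ι → E) (m : E) :
    ∑ i, G (a i) - ∑ i, G (b i) ≤ ∑ i, q (a i - m) + ∑ i, q (m - b i) := by
  have := Finset.sum_le_sum fun i (_ : i ∈ Finset.univ) => add_le_add (hG (a i) m) (hG m (b i))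
  simp only [sub_add_sub_cancel, Finset.sum_sub_distrib, Finset.sum_add_distrib] at this
  linarith

theorem Seminorm.integral_comp_add_sub_le_of_eq_withDensity {E : Type*} [NormedAddCommGroup E]
    [NormedSpace ℝ E] [FiniteDimensional ℝ E] [MeasurableSpace E] [BorelSpace E]
    {ν : Measure E} [ν.IsAddLeftInvariant] (p : Seminorm ℝ E) (K : ℝ) {s : ℝ} (hs : 0 < s)
    {μ : Measure E} [IsProbabilityMeasure μ]
    (hμ : μ = ν.withDensity fun v => ENNReal.ofReal (K * exp (-p v / s)))
    {g : E → ℝ} (hg : Measurable g) (hg01 : ∀ v, g v ∈ Set.Icc 0 1) (x y : E) :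
    ∫ v, g (x + v) ∂μ - ∫ v, g (y + v) ∂μ ≤ p (x - y) / s := by
  subst hμ
  have hp : Continuous p := continuousOn_univ.1 (p.convexOn.continuousOn isOpen_univ)
  exact integral_withDensity_comp_add_left_sub_le (by fun_prop) hg hg01
    (div_nonneg (apply_nonneg _ _) hs.le) (p.ofReal_mul_exp_neg_div_le K hs x y)

theorem statement_10_general (d N : ℕ) (hN : 0 < N) (M η σ : ℝ)
    (hM : 1 ≤ M) (hη0 : 0 < η) (hη1 : η ≤ 1 / 2) (hσ : 0 < σ)
    (p : Seminorm ℝ (Fin d → ℝ))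
    (a b : Fin N → (Fin d → ℝ))
    (hmom :
      (1 / (2 * N : ℝ)) *
          ((∑ i, p (a i - (1 / (2 * N : ℝ)) • (∑ i, a i + ∑ j, b j)) ^ M) +
            ∑ j, p (b j - (1 / (2 * N : ℝ)) • (∑ i, a i + ∑ j, b j)) ^ M) ≤
        σ ^ M)
    (μ : Measure (Fin d → ℝ)) [IsProbabilityMeasure μ]
    (K : ℝ)
    (hdens : μ = volume.withDensity
      (fun v => ENNReal.ofReal
        (K * Real.exp (-(p v) / ((7.5 / η) ^ (1 + 2 / M) * σ)))))
    (g : (Fin d → ℝ) → ℝ) (hgmeas : Measurable g)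
    (hg : ∀ v, g v ∈ Set.Icc (0 : ℝ) 1) :
    (1 / (2 * N : ℝ)) * (∑ i, ∫ v, g (a i + v) ∂μ) +
        (1 / (2 * N : ℝ)) * (∑ j, ∫ v, (1 - g (b j + v)) ∂μ) ≤
      1 / 2 + η := by
  set c : ℝ := (7.5 / η) ^ (1 + 2 / M)
  set m := (1 / (2 * N : ℝ)) • (∑ i, a i + ∑ j, b j)
  set G : (Fin d → ℝ) → ℝ := fun x => ∫ v, g (x + v) ∂μ
  have hc : 1 / η ≤ c := calc
    1 / η ≤ 7.5 / η := by gcongr; norm_num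
    _ ≤ c := self_le_rpow_of_one_le (by rw [le_div_iff₀ hη0]; linarith)
      (le_add_of_nonneg_right (by positivity))
  have hcpos : 0 < c := (one_div_pos.2 hη0).trans_le hc
  have hcσ : 0 < c * σ := mul_pos hcpos hσ
  have hG (x y) : G x - G y ≤ p (x - y) / (c * σ) :=
    p.integral_comp_add_sub_le_of_eq_withDensity K hcσ hdens hgmeas hg x y
  have hspread : (1 / (2 * N : ℝ)) * (∑ i, p (a i - m) + ∑ j, p (b j - m)) ≤ σ := by
    have := Finset.sum_mul_le_of_sum_mul_rpow_le Finset.univ (w := fun _ => 1 / (2 * N : ℝ))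
      (z := Sum.elim (fun i => p (a i - m)) (fun j => p (b j - m)))
      (by intros; positivity) (by simp; field_simp; norm_num) (by rintro (i | j) _ <;> simp)
      hM hσ.le
      (by simpa [Fintype.sum_sum_type, Finset.mul_sum, mul_add] using hmom)
    simpa [Fintype.sum_sum_type, Finset.mul_sum, mul_add] using this
  have hcompl : ∑ j, ∫ v, (1 - g (b j + v)) ∂μ = N - ∑ j, G (b j) := by
    have hint (x) : Integrable (fun v => g (x + v)) μ :=
      .of_bound (hgmeas.comp (measurable_const_add x)).aestronglyMeasurable 1
        (ae_of_all _ fun v => by rw [Real.norm_of_nonneg (hg _).1]; exact (hg _).2)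
    simp [integral_sub (integrable_const 1) (hint _), G]
  calc (1 / (2 * N : ℝ)) * (∑ i, G (a i)) +
        (1 / (2 * N : ℝ)) * (∑ j, ∫ v, (1 - g (b j + v)) ∂μ)
      = 1 / 2 + (1 / (2 * N : ℝ)) * (∑ i, G (a i) - ∑ j, G (b j)) := by
        rw [hcompl]; field_simp; ring
    _ ≤ 1 / 2 + (1 / (2 * N : ℝ)) *
        (∑ i, p (a i - m) / (c * σ) + ∑ j, p (m - b j) / (c * σ)) := by
        gcongr; exact Finset.sum_sub_sum_le_of_sub_le G (fun v => p v / (c * σ)) hG a b m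
    _ = 1 / 2 + (1 / (2 * N : ℝ)) * (∑ i, p (a i - m) + ∑ j, p (b j - m)) / (c * σ) := by
        simp only [map_sub_rev p m, ← Finset.sum_div]; ring
    _ ≤ 1 / 2 + σ / (c * σ) := by gcongr
    _ = 1 / 2 + 1 / c := by field_simp
    _ ≤ 1 / 2 + η := by gcongr; exact (one_div_le hcpos hη0).2 hc

/-- let `M ≥ 1`, `0 < η ≤ 1/2`, `c = (7.5/η)^{1+2/M}`, let `‖·‖`
be any norm on `ℝ^d` (a seminorm `p` with `p x = 0 → x = 0`), let
`a_1, …, a_N, b_1, …, b_N ∈ ℝ^d`, let `Z` be uniform on the combined list and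
suppose `σ > 0` satisfies `E‖Z - EZ‖^M ≤ σ^M`. Let `X` have density
proportional to `exp(-‖x‖/(cσ))` w.r.t. Lebesgue measure. Then every
measurable randomized classifier `g : ℝ^d → [0,1]` has membership-inference
success probability
`(1/(2N)) ∑_i E[g(a_i + X)] + (1/(2N)) ∑_j E[1 - g(b_j + X)] ≤ 1/2 + η`. -/
theorem statement_10 (d N : ℕ) (hN : 0 < N) (M η σ : ℝ)
    (hM : 1 ≤ M) (hη0 : 0 < η) (hη1 : η ≤ 1 / 2) (hσ : 0 < σ)
    (p : Seminorm ℝ (Fin d → ℝ)) (hpdef : ∀ v : Fin d → ℝ, p v = 0 → v = 0)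
    (a b : Fin N → (Fin d → ℝ))
    (hmom :
      (1 / (2 * N : ℝ)) *
          ((∑ i, p (a i - (1 / (2 * N : ℝ)) • (∑ i, a i + ∑ j, b j)) ^ M) +
            ∑ j, p (b j - (1 / (2 * N : ℝ)) • (∑ i, a i + ∑ j, b j)) ^ M) ≤
        σ ^ M)
    (μ : Measure (Fin d → ℝ)) [IsProbabilityMeasure μ]
    (K : ℝ) (hK : 0 < K)
    (hdens : μ = volume.withDensity
      (fun v => ENNReal.ofReal
        (K * Real.exp (-(p v) / ((7.5 / η) ^ (1 + 2 / M) * σ)))))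
    (g : (Fin d → ℝ) → ℝ) (hgmeas : Measurable g)
    (hg : ∀ v, g v ∈ Set.Icc (0 : ℝ) 1) :
    (1 / (2 * N : ℝ)) * (∑ i, ∫ v, g (a i + v) ∂μ) +
        (1 / (2 * N : ℝ)) * (∑ j, ∫ v, (1 - g (b j + v)) ∂μ) ≤
      1 / 2 + η :=
  statement_10_general d N hN M η σ hM hη0 hη1 hσ p a b hmom μ K hdens g hgmeas hg
end

section
/- Let M ≥ 2, 0 < η ≤ 1/2, and set c = (6.16/η)^{1 + 2/M}. Let ‖·‖ be any norm on ℝ^d, let a_1, …, a_N, b_1, …, b_N ∈ ℝ^d, let Z be uniformly distributed over the list (a_1, …, a_N, b_1, …, b_N), and suppose σ > 0 satisfies E‖Z − EZ‖^M ≤ σ^M. Let X be a random vector in ℝ^d whose law has density proportional to exp(−‖x‖/(cσ)) with respect to Lebesgue measure. Then for every measurable randomized classifier g : ℝ^d → [0,1], (1/(2N)) Σ_{i=1}^N E[g(a_i + X)] + (1/(2N)) Σ_{j=1}^N E[1 − g(b_j + X)] ≤ 1/2 + η. -/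
/-!
By the triangle inequality for `p`, the noise density `f v ∝ exp (-p v / s)`, `s = c σ`, changes
by at most the factor `exp (p (x - y) / s)` when its argument is shifted by `x - y`. Hence the
acceptance probability `L x = E[g (x + X)] ∈ [0, 1]` satisfies
`L x - L y ≤ 1 - exp (-p (x - y) / s) ≤ p (x - y) / s`. The success probability equals
`1/2 + (1/(2N)) ∑ i, (L (a i) - L (b i))`; routing `a i - b i` through the centre `EZ` and applying
Jensen to the `M`-th moment bounds `(1/(2N)) ∑ i, p (a i - b i)` by `σ`, so the advantage is at
most `1 / c ≤ η / 6.16`.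
-/

open MeasureTheory ENNReal

section Translation

variable {G : Type*} [AddCommGroup G] [MeasurableSpace G] [MeasurableAdd G]
  (ν : Measure G) [ν.IsAddRightInvariant]

theorem lintegral_comp_add_withDensity_le {f h : G → ℝ≥0∞} (hf : Measurable f)
    (hh : Measurable h) {x y : G} {C : ℝ≥0∞} (hC : C ≠ ∞)
    (hfC : ∀ w, f (w - x) ≤ C * f (w - y)) :
    ∫⁻ v, h (x + v) ∂ν.withDensity f ≤ C * ∫⁻ v, h (y + v) ∂ν.withDensity f := by
  have htranslate : ∀ z, ∫⁻ v, h (z + v) ∂ν.withDensity f = ∫⁻ w, h w * f (w - z) ∂ν := by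
    intro z
    rw [lintegral_withDensity_eq_lintegral_mul _ hf
        (show Measurable fun v => h (z + v) from hh.comp (measurable_const_add z)),
      ← lintegral_sub_right_eq_self _ z]
    simp [mul_comm]
  rw [htranslate, htranslate, ← lintegral_const_mul' _ _ hC]
  exact lintegral_mono fun w => by rw [mul_left_comm]; gcongr; exact hfC w

theorem integral_comp_add_withDensity_le {f : G → ℝ≥0∞} (hf : Measurable f) {g : G → ℝ}
    (hg : Measurable g) (hg0 : ∀ v, 0 ≤ g v) {x y : G}
    (hint : Integrable (fun v => g (y + v)) (ν.withDensity f)) {C : ℝ} (hC : 0 ≤ C)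
    (hfC : ∀ w, f (w - x) ≤ ENNReal.ofReal C * f (w - y)) :
    ∫ v, g (x + v) ∂ν.withDensity f ≤ C * ∫ v, g (y + v) ∂ν.withDensity f := by
  have hmeas : ∀ z, Measurable fun v => g (z + v) := fun z => hg.comp (measurable_const_add z)
  have hfin : ∫⁻ v, ENNReal.ofReal (g (y + v)) ∂ν.withDensity f ≠ ∞ :=
    (lintegral_ofReal_ne_top_iff_integrable (hmeas y).aestronglyMeasurable
      (ae_of_all _ fun v => hg0 _)).2 hint
  rw [integral_eq_lintegral_of_nonneg_ae (ae_of_all _ fun v => hg0 _)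
      (hmeas x).aestronglyMeasurable,
    integral_eq_lintegral_of_nonneg_ae (ae_of_all _ fun v => hg0 _)
      (hmeas y).aestronglyMeasurable, ← ENNReal.toReal_ofReal hC, ← ENNReal.toReal_mul]
  exact ENNReal.toReal_mono (mul_ne_top ofReal_ne_top hfin)
    (lintegral_comp_add_withDensity_le ν hf hg.ennreal_ofReal ofReal_ne_top hfC)

end Translation

noncomputable def laplaceDensity {E : Type*} [AddCommGroup E] [Module ℝ E] (p : Seminorm ℝ E)
    (K s : ℝ) (v : E) : ℝ≥0∞ :=
  ENNReal.ofReal (K * Real.exp (-(p v) / s))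

theorem laplaceDensity_sub_le {E : Type*} [AddCommGroup E] [Module ℝ E] (p : Seminorm ℝ E)
    {K s : ℝ} (hK : 0 ≤ K) (hs : 0 < s) (w x y : E) :
    laplaceDensity p K s (w - x) ≤
      ENNReal.ofReal (Real.exp (p (x - y) / s)) * laplaceDensity p K s (w - y) := by
  have htri : p (w - y) ≤ p (w - x) + p (x - y) := by
    simpa using map_add_le_add p (w - x) (x - y)
  rw [laplaceDensity, laplaceDensity, ← ENNReal.ofReal_mul (Real.exp_nonneg _), mul_left_comm,
    ← Real.exp_add]
  gcongr
  rw [← add_div]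
  gcongr
  linarith

theorem measurable_laplaceDensity {E : Type*} [NormedAddCommGroup E] [NormedSpace ℝ E]
    [FiniteDimensional ℝ E] [MeasurableSpace E] [BorelSpace E] (p : Seminorm ℝ E) (K s : ℝ) :
    Measurable (laplaceDensity p K s) := by
  have hp : Continuous p := continuousOn_univ.1 (p.convexOn.continuousOn isOpen_univ)
  exact (measurable_const.mul (hp.measurable.neg.div_const s).exp).ennreal_ofReal

theorem Real.sub_le_of_le_exp_mul {t u v : ℝ} (hu : u ≤ 1) (ht : 0 ≤ t)
    (h : u ≤ Real.exp t * v) : u - v ≤ t := by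
  have hv : Real.exp (-t) * u ≤ v := by
    rw [Real.exp_neg, inv_mul_le_iff₀ (Real.exp_pos t)]; exact h
  nlinarith [Real.add_one_le_exp (-t), Real.exp_le_one_iff.2 (neg_nonpos.2 ht)]

theorem Real.mean_le_of_mean_rpow_le {ι : Type*} (s : Finset ι) (hs : s.Nonempty) {z : ι → ℝ}
    (hz : ∀ i ∈ s, 0 ≤ z i) {M σ : ℝ} (hM : 1 ≤ M) (hσ : 0 ≤ σ)
    (h : (1 / s.card : ℝ) * ∑ i ∈ s, z i ^ M ≤ σ ^ M) :
    (1 / s.card : ℝ) * ∑ i ∈ s, z i ≤ σ := by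
  have hw : ∑ _i ∈ s, (1 / s.card : ℝ) = 1 := by
    rw [Finset.sum_const, nsmul_eq_mul]; field_simp [hs.card_pos.ne']
  have hjensen := Real.rpow_arith_mean_le_arith_mean_rpow s (fun _ => (1 / s.card : ℝ)) z
    (fun _ _ => by positivity) hw hz hM
  rw [← Finset.mul_sum, ← Finset.mul_sum] at hjensen
  have hmean : 0 ≤ (1 / s.card : ℝ) * ∑ i ∈ s, z i :=
    mul_nonneg (by positivity) (Finset.sum_nonneg hz)
  exact (Real.rpow_le_rpow_iff hmean hσ (by linarith)).1 (hjensen.trans h)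

theorem Seminorm.mean_sub_le_of_moment_le {E ι : Type*} [AddCommGroup E] [Module ℝ E]
    (p : Seminorm ℝ E) [Fintype ι] [Nonempty ι] (a b : ι → E) (m : E) {M σ : ℝ} (hM : 1 ≤ M)
    (hσ : 0 ≤ σ)
    (hmom : (1 / (2 * Fintype.card ι : ℝ)) * (∑ i, p (a i - m) ^ M + ∑ j, p (b j - m) ^ M) ≤
      σ ^ M) :
    (1 / (2 * Fintype.card ι : ℝ)) * ∑ i, p (a i - b i) ≤ σ := by
  have hcard : ((Finset.univ : Finset (ι ⊕ ι)).card : ℝ) = 2 * Fintype.card ι := by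
    simp only [Finset.card_univ, Fintype.card_sum, Nat.cast_add]; ring
  have hmean := Real.mean_le_of_mean_rpow_le Finset.univ Finset.univ_nonempty
    (z := fun k => p (Sum.elim a b k - m)) (fun _ _ => apply_nonneg _ _) hM hσ
    (by rw [hcard, Fintype.sum_sum_type]; exact hmom)
  rw [hcard, Fintype.sum_sum_type, ← Finset.sum_add_distrib] at hmean
  refine le_trans ?_ hmean
  gcongr with i
  simpa using map_sub_le_add p (a i - m) (b i - m)

theorem laplace_integral_comp_add_sub_le {E : Type*} [NormedAddCommGroup E] [NormedSpace ℝ E]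
    [FiniteDimensional ℝ E] [MeasurableSpace E] [BorelSpace E] (ν : Measure E)
    [ν.IsAddRightInvariant] (p : Seminorm ℝ E) {K s : ℝ} (hK : 0 ≤ K) (hs : 0 < s)
    (μ : Measure E) [IsProbabilityMeasure μ] (hμ : μ = ν.withDensity (laplaceDensity p K s))
    {g : E → ℝ} (hg : Measurable g) (hg01 : ∀ v, g v ∈ Set.Icc 0 1) (x y : E) :
    ∫ v, g (x + v) ∂μ - ∫ v, g (y + v) ∂μ ≤ p (x - y) / s := by
  have hint : ∀ z, Integrable (fun v => g (z + v)) μ := fun z =>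
    .of_mem_Icc 0 1 (hg.comp (measurable_const_add z)).aemeasurable (ae_of_all _ fun v => hg01 _)
  have hle_one : ∫ v, g (x + v) ∂μ ≤ 1 := by
    simpa using integral_mono (hint x) (integrable_const 1) fun v => (hg01 (x + v)).2
  refine Real.sub_le_of_le_exp_mul hle_one (div_nonneg (apply_nonneg p _) hs.le) ?_
  subst hμ
  exact integral_comp_add_withDensity_le ν (measurable_laplaceDensity p K s) hg
    (fun v => (hg01 v).1) (hint y) (Real.exp_nonneg _) fun w => laplaceDensity_sub_le p hK hs w x y

theorem statement_11_general (d N : ℕ) (hN : 0 < N) (M η σ : ℝ)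
    (hM : 2 ≤ M) (hη0 : 0 < η) (hη1 : η ≤ 1 / 2) (hσ : 0 < σ)
    (p : Seminorm ℝ (Fin d → ℝ))
    (a b : Fin N → (Fin d → ℝ))
    (hmom :
      (1 / (2 * N : ℝ)) *
          ((∑ i, p (a i - (1 / (2 * N : ℝ)) • (∑ i, a i + ∑ j, b j)) ^ M) +
            ∑ j, p (b j - (1 / (2 * N : ℝ)) • (∑ i, a i + ∑ j, b j)) ^ M) ≤
        σ ^ M)
    (μ : Measure (Fin d → ℝ)) [IsProbabilityMeasure μ]
    (K : ℝ) (hK : 0 < K)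
    (hdens : μ = volume.withDensity
      (fun v => ENNReal.ofReal
        (K * Real.exp (-(p v) / ((6.16 / η) ^ (1 + 2 / M) * σ)))))
    (g : (Fin d → ℝ) → ℝ) (hgmeas : Measurable g)
    (hg : ∀ v, g v ∈ Set.Icc (0 : ℝ) 1) :
    (1 / (2 * N : ℝ)) * (∑ i, ∫ v, g (a i + v) ∂μ) +
        (1 / (2 * N : ℝ)) * (∑ j, ∫ v, (1 - g (b j + v)) ∂μ) ≤
      1 / 2 + η := by
  set c := (6.16 / η) ^ (1 + 2 / M)
  have hc : 6.16 / η ≤ c := Real.self_le_rpow_of_one_le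
    (by rw [le_div_iff₀ hη0]; linarith) (le_add_of_nonneg_right (by positivity))
  have hgap := laplace_integral_comp_add_sub_le volume p hK.le (by positivity) μ hdens hgmeas hg
  have hcompl : ∀ j, ∫ v, (1 - g (b j + v)) ∂μ = 1 - ∫ v, g (b j + v) ∂μ := fun j => by
    rw [integral_sub (integrable_const 1) (.of_mem_Icc 0 1 (X := fun v => g (b j + v))
      (hgmeas.comp (measurable_const_add _)).aemeasurable (ae_of_all _ fun v => hg _))]
    simp
  have := Fin.pos_iff_nonempty.1 hN
  have hspread := p.mean_sub_le_of_moment_le a b _ (by linarith : (1 : ℝ) ≤ M) hσ.le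
    (by simpa using hmom)
  simp only [Fintype.card_fin] at hspread
  calc (1 / (2 * N : ℝ)) * (∑ i, ∫ v, g (a i + v) ∂μ) +
        (1 / (2 * N : ℝ)) * (∑ j, ∫ v, (1 - g (b j + v)) ∂μ)
      = 1 / 2 + (1 / (2 * N : ℝ)) * ∑ i, (∫ v, g (a i + v) ∂μ - ∫ v, g (b i + v) ∂μ) := by
        simp only [hcompl, Finset.sum_sub_distrib, Finset.sum_const, Finset.card_univ,
          Fintype.card_fin, nsmul_eq_mul, mul_one]
        field_simp
        ring
    _ ≤ 1 / 2 + (1 / (2 * N : ℝ)) * ∑ i, p (a i - b i) / (c * σ) := by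
        gcongr with i; exact hgap _ _
    _ ≤ 1 / 2 + σ / (c * σ) := by
        rw [← Finset.sum_div, ← mul_div_assoc]; gcongr
    _ ≤ 1 / 2 + η := by
        rw [div_mul_cancel_right₀ hσ.ne']
        gcongr
        rw [inv_le_iff_one_le_mul₀ (by positivity)]
        linarith [(div_le_iff₀ hη0).1 hc]

/-- let `M ≥ 2`, `0 < η ≤ 1/2`, `c = (6.16/η)^{1+2/M}`, let `‖·‖`
be any norm on `ℝ^d` (a seminorm `p` with `p x = 0 → x = 0`), let
`a_1, …, a_N, b_1, …, b_N ∈ ℝ^d`, let `Z` be uniform on the combined list and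
suppose `σ > 0` satisfies `E‖Z - EZ‖^M ≤ σ^M`. Let `X` have density
proportional to `exp(-‖x‖/(cσ))` w.r.t. Lebesgue measure. Then every
measurable randomized classifier `g : ℝ^d → [0,1]` has membership-inference
success probability
`(1/(2N)) ∑_i E[g(a_i + X)] + (1/(2N)) ∑_j E[1 - g(b_j + X)] ≤ 1/2 + η`. -/
theorem statement_11 (d N : ℕ) (hN : 0 < N) (M η σ : ℝ)
    (hM : 2 ≤ M) (hη0 : 0 < η) (hη1 : η ≤ 1 / 2) (hσ : 0 < σ)
    (p : Seminorm ℝ (Fin d → ℝ)) (hpdef : ∀ v : Fin d → ℝ, p v = 0 → v = 0)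
    (a b : Fin N → (Fin d → ℝ))
    (hmom :
      (1 / (2 * N : ℝ)) *
          ((∑ i, p (a i - (1 / (2 * N : ℝ)) • (∑ i, a i + ∑ j, b j)) ^ M) +
            ∑ j, p (b j - (1 / (2 * N : ℝ)) • (∑ i, a i + ∑ j, b j)) ^ M) ≤
        σ ^ M)
    (μ : Measure (Fin d → ℝ)) [IsProbabilityMeasure μ]
    (K : ℝ) (hK : 0 < K)
    (hdens : μ = volume.withDensity
      (fun v => ENNReal.ofReal
        (K * Real.exp (-(p v) / ((6.16 / η) ^ (1 + 2 / M) * σ)))))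
    (g : (Fin d → ℝ) → ℝ) (hgmeas : Measurable g)
    (hg : ∀ v, g v ∈ Set.Icc (0 : ℝ) 1) :
    (1 / (2 * N : ℝ)) * (∑ i, ∫ v, g (a i + v) ∂μ) +
        (1 / (2 * N : ℝ)) * (∑ j, ∫ v, (1 - g (b j + v)) ∂μ) ≤
      1 / 2 + η :=
  statement_11_general d N hN M η σ hM hη0 hη1 hσ p a b hmom μ K hK hdens g hgmeas hg
end

section
/- Let M ≥ 2, 0 < η ≤ 1/2, and set c = (6.16/η)^{1 + 2/M}. Let a_1, …, a_N, b_1, …, b_N ∈ ℝ^d, let Z = (Z_1, …, Z_d) be uniformly distributed over the list (a_1, …, a_N, b_1, …, b_N), and suppose σ_1, …, σ_d > 0 satisfy σ_i^M ≥ E|Z_i − E Z_i|^M for each coordinate i. Define the norm ‖x‖_{σ,M} = ( Σ_{i=1}^d |x_i|^M / (d σ_i^M) )^{1/M} on ℝ^d, and let X be a random vector whose law has density proportional to exp(−‖x‖_{σ,M} / c) with respect to Lebesgue measure. Then for every measurable randomized classifier g : ℝ^d → [0,1], (1/(2N)) Σ_{i=1}^N E[g(a_i + X)] + (1/(2N))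 Σ_{j=1}^N E[1 − g(b_j + X)] ≤ 1/2 + η. -/
open MeasureTheory Finset
open scoped ENNReal

/-!
Translating the density `∝ exp (-‖v‖_{σ,M} / c)` by `s` multiplies it pointwise by at least
`exp (-‖s‖_{σ,M} / c)`, by the triangle inequality for `‖·‖_{σ,M}` (Minkowski). Hence for each
pair the adversary gains at most `1 - exp (-‖a_i - b_i‖ / c) ≤ ‖a_i - b_i‖ / c`. Splitting
`a_i - b_i` at the mean `m`, the power-mean inequality and the coordinatewise `M`-th moment bounds
give `∑ i, ‖a_i - b_i‖ ≤ 2N`, so the success probability is at most `1/2 + 1/c ≤ 1/2 + η`.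
-/

lemma sum_le_card_of_sum_rpow_le_card {κ : Type*} [Fintype κ] {p : ℝ} (hp : 1 ≤ p)
    {z : κ → ℝ} (hz : ∀ k, 0 ≤ z k) (h : ∑ k, z k ^ p ≤ Fintype.card κ) :
    ∑ k, z k ≤ Fintype.card κ := by
  have hn : (0 : ℝ) ≤ Fintype.card κ := Nat.cast_nonneg _
  have hp0 : 0 < p := by linarith
  refine (Real.rpow_le_rpow_iff (sum_nonneg fun k _ => hz k) hn hp0).1 ?_
  calc (∑ k, z k) ^ p ≤ (Fintype.card κ : ℝ) ^ (p - 1) * ∑ k, z k ^ p :=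
        Real.rpow_sum_le_const_mul_sum_rpow_of_nonneg univ hp fun k _ => hz k
    _ ≤ (Fintype.card κ : ℝ) ^ (p - 1) * (Fintype.card κ : ℝ) ^ (1 : ℝ) := by
        rw [Real.rpow_one]; gcongr
    _ = (Fintype.card κ : ℝ) ^ p := by
        rw [← Real.rpow_add' hn (by simpa using hp0.ne'), sub_add_cancel]

section WeightedNorm

variable {ι : Type*} [Fintype ι] {M : ℝ} {w : ι → ℝ}

/-- The paper's `‖x‖_{σ,M}` is `weightedLpNorm M (fun t => d * σ t ^ M) x`. -/
noncomputable def weightedLpNorm (M : ℝ) (w : ι → ℝ) (x : ι → ℝ) : ℝ :=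
  (∑ t, |x t| ^ M / w t) ^ (1 / M)

lemma weightedLpNorm_nonneg (hw : 0 ≤ w) (x : ι → ℝ) : 0 ≤ weightedLpNorm M w x :=
  Real.rpow_nonneg (sum_nonneg fun t _ => div_nonneg (by positivity) (hw t)) _

lemma weightedLpNorm_rpow (hM : M ≠ 0) (hw : 0 ≤ w) (x : ι → ℝ) :
    weightedLpNorm M w x ^ M = ∑ t, |x t| ^ M / w t := by
  rw [weightedLpNorm, one_div,
    Real.rpow_inv_rpow (sum_nonneg fun t _ => div_nonneg (by positivity) (hw t)) hM]

lemma weightedLpNorm_eq_lpNorm_div (hM : M ≠ 0) (hw : 0 ≤ w) (x : ι → ℝ) :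
    weightedLpNorm M w x = (∑ t, |x t / w t ^ (1 / M)| ^ M) ^ (1 / M) := by
  rw [weightedLpNorm]
  congr 1
  refine Finset.sum_congr rfl fun t _ => ?_
  have hwt : 0 ≤ w t ^ (1 / M) := Real.rpow_nonneg (hw t) _
  rw [abs_div, abs_of_nonneg hwt, Real.div_rpow (abs_nonneg _) hwt,
    one_div, Real.rpow_inv_rpow (hw t) hM]

lemma weightedLpNorm_add_le (hM : 1 ≤ M) (hw : 0 ≤ w) (x y : ι → ℝ) :
    weightedLpNorm M w (x + y) ≤ weightedLpNorm M w x + weightedLpNorm M w y := by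
  have hM0 : M ≠ 0 := by positivity
  simp only [weightedLpNorm_eq_lpNorm_div hM0 hw, Pi.add_apply, add_div]
  exact Real.Lp_add_le univ _ _ hM

end WeightedNorm

lemma sum_weightedLpNorm_le_card {κ : Type*} [Fintype κ] {d : ℕ} {M : ℝ} (hM : 1 ≤ M)
    {σ : Fin d → ℝ} (hσ : ∀ t, 0 ≤ σ t) (z : κ → Fin d → ℝ)
    (hmom : ∀ t, ∑ k, |z k t| ^ M ≤ Fintype.card κ * σ t ^ M) :
    ∑ k, weightedLpNorm M (fun t => (d : ℝ) * σ t ^ M) (z k) ≤ Fintype.card κ := by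
  have hw : 0 ≤ fun t => (d : ℝ) * σ t ^ M := fun t => by have := hσ t; positivity
  refine sum_le_card_of_sum_rpow_le_card hM (fun k => weightedLpNorm_nonneg hw _) ?_
  have hterm : ∀ t, (∑ k, |z k t| ^ M) / ((d : ℝ) * σ t ^ M) ≤ Fintype.card κ / d := by
    intro t
    rw [mul_comm, ← div_div]
    gcongr
    exact div_le_of_le_mul₀ (Real.rpow_nonneg (hσ t) M) (Nat.cast_nonneg _) (hmom t)
  calc ∑ k, weightedLpNorm M (fun t => (d : ℝ) * σ t ^ M) (z k) ^ M
      = ∑ t, (∑ k, |z k t| ^ M) / ((d : ℝ) * σ t ^ M) := by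
        simp only [weightedLpNorm_rpow (by positivity : M ≠ 0) hw, sum_div]
        exact sum_comm
    _ ≤ ∑ _t : Fin d, (Fintype.card κ : ℝ) / d := sum_le_sum fun t _ => hterm t
    _ ≤ Fintype.card κ := by
        rw [sum_const, card_univ, Fintype.card_fin, nsmul_eq_mul]
        rcases eq_or_ne (d : ℝ) 0 with hd | hd
        · simp [hd]
        · rw [mul_div_cancel₀ _ hd]

section Translation

variable {E : Type*} [MeasurableSpace E]

lemma map_add_right_withDensity [AddGroup E] [MeasurableAdd E] (ν : Measure E)
    [ν.IsAddRightInvariant] (ρ : E → ℝ≥0∞) (s : E) :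
    (ν.withDensity ρ).map (· + s) = ν.withDensity fun w => ρ (w - s) := by
  ext A hA
  rw [Measure.map_apply (measurable_add_const s) hA, withDensity_apply _ hA,
    withDensity_apply _ (measurable_add_const s hA),
    ← (measurePreserving_add_right ν s).setLIntegral_comp_preimage_emb
      (measurableEmbedding_addRight s) (fun w => ρ (w - s)) A]
  simp only [add_sub_cancel_right]

lemma smul_le_map_add_right_of_expDensity [AddGroup E] [MeasurableAdd E] (ν : Measure E)
    [ν.IsAddRightInvariant] {p : E → ℝ} (hp : ∀ x y, p (x + y) ≤ p x + p y) {K c : ℝ}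
    (hK : 0 ≤ K) (hc : 0 ≤ c) (s : E) :
    ENNReal.ofReal (Real.exp (-p (-s) / c)) •
        ν.withDensity (fun v => ENNReal.ofReal (K * Real.exp (-p v / c))) ≤
      (ν.withDensity fun v => ENNReal.ofReal (K * Real.exp (-p v / c))).map (· + s) := by
  rw [map_add_right_withDensity, ← withDensity_smul' _ _ ENNReal.ofReal_ne_top]
  refine withDensity_mono (ae_of_all _ fun w => ?_)
  rw [Pi.smul_apply, smul_eq_mul, ← ENNReal.ofReal_mul (Real.exp_pos _).le]
  refine ENNReal.ofReal_le_ofReal ?_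
  rw [mul_left_comm, ← Real.exp_add, ← add_div, sub_eq_add_neg]
  gcongr
  linarith [hp w (-s)]

lemma integral_sub_integral_le_of_smul_le_map [AddCommGroup E] [MeasurableAdd E]
    {μ : Measure E} [IsProbabilityMeasure μ] {r : ℝ≥0∞} {a b : E}
    (hμ : r • μ ≤ μ.map (· + (b - a))) {g : E → ℝ} (hg : Measurable g)
    (hg01 : ∀ v, g v ∈ Set.Icc (0 : ℝ) 1) :
    ∫ v, g (a + v) ∂μ - ∫ v, g (b + v) ∂μ ≤ 1 - r.toReal := by
  have hmeas : Measurable fun v => g (a + v) := hg.comp (measurable_const_add a)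
  have hint : ∀ (ν : Measure E) [IsFiniteMeasure ν], Integrable (fun v => g (a + v)) ν :=
    fun ν _ => Integrable.of_mem_Icc 0 1 hmeas.aemeasurable (ae_of_all _ fun v => hg01 _)
  have hr : r.toReal ≤ 1 := by
    have h := hμ Set.univ
    rw [Measure.smul_apply, measure_univ, smul_eq_mul, mul_one,
      Measure.map_apply (measurable_add_const _) MeasurableSet.univ, Set.preimage_univ,
      measure_univ] at h
    exact ENNReal.toReal_le_of_le_ofReal zero_le_one (by simpa using h)
  have hshift : r.toReal * ∫ v, g (a + v) ∂μ ≤ ∫ v, g (b + v) ∂μ :=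
    calc r.toReal * ∫ v, g (a + v) ∂μ = ∫ v, g (a + v) ∂(r • μ) := by
          rw [integral_smul_measure, smul_eq_mul]
      _ ≤ ∫ v, g (a + v) ∂(μ.map (· + (b - a))) :=
          integral_mono_measure hμ (ae_of_all _ fun v => (hg01 _).1) (hint _)
      _ = ∫ v, g (b + v) ∂μ := by
          rw [integral_map (measurable_add_const _).aemeasurable hmeas.aestronglyMeasurable]
          congr 1 with v
          congr 1
          abel
  have hle : ∫ v, g (a + v) ∂μ ≤ 1 := by
    simpa using integral_mono (hint μ) (integrable_const (1 : ℝ))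
      fun v => (hg01 _).2
  nlinarith

lemma integral_sub_integral_le_of_expDensity [AddCommGroup E] [MeasurableAdd E] (ν : Measure E)
    [ν.IsAddRightInvariant] {p : E → ℝ} (hp : ∀ x y, p (x + y) ≤ p x + p y) {K c : ℝ}
    (hK : 0 ≤ K) (hc : 0 ≤ c) {μ : Measure E} [IsProbabilityMeasure μ]
    (hμ : μ = ν.withDensity fun v => ENNReal.ofReal (K * Real.exp (-p v / c)))
    {g : E → ℝ} (hg : Measurable g) (hg01 : ∀ v, g v ∈ Set.Icc (0 : ℝ) 1) (a b : E) :
    ∫ v, g (a + v) ∂μ - ∫ v, g (b + v) ∂μ ≤ p (a - b) / c := by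
  have hμ' : ENNReal.ofReal (Real.exp (-p (a - b) / c)) • μ ≤ μ.map (· + (b - a)) := by
    simpa only [hμ, neg_sub] using smul_le_map_add_right_of_expDensity ν hp hK hc (b - a)
  have h := integral_sub_integral_le_of_smul_le_map hμ' hg hg01
  rw [ENNReal.toReal_ofReal (Real.exp_pos _).le] at h
  linarith [Real.add_one_le_exp (-p (a - b) / c), neg_div c (p (a - b))]

end Translation

lemma sum_weightedLpNorm_sub_le {d N : ℕ} (hN : 0 < N) {M : ℝ} (hM : 1 ≤ M) {σ : Fin d → ℝ}
    (hσ : ∀ t, 0 ≤ σ t) (a b : Fin N → Fin d → ℝ) (m : Fin d → ℝ)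
    (hmom : ∀ t, (1 / (2 * N : ℝ)) *
      ((∑ i, |a i t - m t| ^ M) + ∑ j, |b j t - m t| ^ M) ≤ σ t ^ M) :
    ∑ i, weightedLpNorm M (fun t => (d : ℝ) * σ t ^ M) (a i - b i) ≤ 2 * N := by
  have hw : 0 ≤ fun t => (d : ℝ) * σ t ^ M := fun t => by have := hσ t; positivity
  have h := sum_weightedLpNorm_le_card hM hσ (Sum.elim (fun i => a i - m) fun j => m - b j)
    fun t => by
      have h := hmom t
      rw [one_div_mul_eq_div, div_le_iff₀' (by positivity)] at h
      simp only [Fintype.sum_sum_type, Fintype.card_sum, Fintype.card_fin, Sum.elim_inl,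
        Sum.elim_inr, Pi.sub_apply, abs_sub_comm (m t)]
      push_cast
      linarith
  simp only [Fintype.sum_sum_type, Sum.elim_inl, Sum.elim_inr, Fintype.card_sum,
    Fintype.card_fin, Nat.cast_add, ← sum_add_distrib] at h
  refine le_trans (sum_le_sum fun i _ => ?_) (two_mul (N : ℝ) ▸ h)
  simpa using weightedLpNorm_add_le hM hw (a i - m) (m - b i)

lemma success_le_half_add_of_sum_sub_le {E : Type*} [MeasurableSpace E] [Add E] [MeasurableAdd E]
    {N : ℕ} (hN : 0 < N) {μ : Measure E} [IsProbabilityMeasure μ] {g : E → ℝ}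
    (hg : Measurable g) (hg01 : ∀ v, g v ∈ Set.Icc (0 : ℝ) 1) {a b : Fin N → E} {η : ℝ}
    (h : ∑ i, (∫ v, g (a i + v) ∂μ - ∫ v, g (b i + v) ∂μ) ≤ 2 * N * η) :
    (1 / (2 * N : ℝ)) * (∑ i, ∫ v, g (a i + v) ∂μ) +
        (1 / (2 * N : ℝ)) * (∑ j, ∫ v, (1 - g (b j + v)) ∂μ) ≤ 1 / 2 + η := by
  have hcompl : ∀ j, ∫ v, (1 - g (b j + v)) ∂μ = 1 - ∫ v, g (b j + v) ∂μ := fun j => by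
    have hint : Integrable (fun v => g (b j + v)) μ :=
      Integrable.of_mem_Icc 0 1 (hg.comp (measurable_const_add _)).aemeasurable
        (ae_of_all _ fun v => hg01 _)
    rw [integral_sub (integrable_const 1) hint]
    simp
  have hN0 : (N : ℝ) ≠ 0 := by positivity
  calc (1 / (2 * N : ℝ)) * (∑ i, ∫ v, g (a i + v) ∂μ) +
        (1 / (2 * N : ℝ)) * (∑ j, ∫ v, (1 - g (b j + v)) ∂μ)
      = 1 / 2 + (1 / (2 * N : ℝ)) * ∑ i, (∫ v, g (a i + v) ∂μ - ∫ v, g (b i + v) ∂μ) := by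
        simp only [hcompl, sum_sub_distrib, sum_const, card_univ, Fintype.card_fin, nsmul_eq_mul,
          mul_one]
        field_simp
        ring
    _ ≤ 1 / 2 + (1 / (2 * N : ℝ)) * (2 * N * η) := by gcongr
    _ = 1 / 2 + η := by field_simp

/-- non-isotropic noise: let `M ≥ 2`, `0 < η ≤ 1/2`,
`c = (6.16/η)^{1+2/M}`, let `a_1, …, a_N, b_1, …, b_N ∈ ℝ^d`, let `Z` be
uniform on the combined list, and suppose `σ_i > 0` satisfies
`σ_i^M ≥ E|Z_i - EZ_i|^M` for each coordinate `i`. With the weighted norm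
`‖v‖_{σ,M} = (∑_i |v_i|^M/(d σ_i^M))^{1/M}`, let `X` have density proportional
to `exp(-‖v‖_{σ,M}/c)` w.r.t. Lebesgue measure. Then every measurable
randomized classifier `g : ℝ^d → [0,1]` has membership-inference success
probability at most `1/2 + η`. -/
theorem statement_12 (d N : ℕ) (hN : 0 < N) (M η : ℝ)
    (hM : 2 ≤ M) (hη0 : 0 < η) (hη1 : η ≤ 1 / 2)
    (σ : Fin d → ℝ) (hσ : ∀ t, 0 < σ t)
    (a b : Fin N → (Fin d → ℝ))
    (hmom : ∀ t : Fin d,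
      (1 / (2 * N : ℝ)) *
          ((∑ i, |a i t - ((1 / (2 * N : ℝ)) • (∑ i, a i + ∑ j, b j)) t| ^ M) +
            ∑ j, |b j t - ((1 / (2 * N : ℝ)) • (∑ i, a i + ∑ j, b j)) t| ^ M) ≤
        σ t ^ M)
    (μ : Measure (Fin d → ℝ)) [IsProbabilityMeasure μ]
    (K : ℝ) (hK : 0 < K)
    (hdens : μ = volume.withDensity
      (fun v => ENNReal.ofReal
        (K * Real.exp (-((∑ t, |v t| ^ M / ((d : ℝ) * σ t ^ M)) ^ (1 / M)) /
          ((6.16 / η) ^ (1 + 2 / M))))))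
    (g : (Fin d → ℝ) → ℝ) (hgmeas : Measurable g)
    (hg : ∀ v, g v ∈ Set.Icc (0 : ℝ) 1) :
    (1 / (2 * N : ℝ)) * (∑ i, ∫ v, g (a i + v) ∂μ) +
        (1 / (2 * N : ℝ)) * (∑ j, ∫ v, (1 - g (b j + v)) ∂μ) ≤
      1 / 2 + η := by
  set p := weightedLpNorm M fun t => (d : ℝ) * σ t ^ M
  set c : ℝ := (6.16 / η) ^ (1 + 2 / M)
  have hM1 : 1 ≤ M := by linarith
  have hw : 0 ≤ fun t => (d : ℝ) * σ t ^ M := fun t => by have := hσ t; positivity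
  have hc : 1 ≤ η * c := by
    have h616 : 1 ≤ 6.16 / η := by rw [le_div_iff₀ hη0]; linarith
    calc 1 ≤ η * (6.16 / η) := by rw [mul_div_cancel₀ _ hη0.ne']; norm_num
      _ ≤ η * c := by
          gcongr
          exact Real.self_le_rpow_of_one_le h616 (le_add_of_nonneg_right (by positivity))
  have hc0 : 0 < c := pos_of_mul_pos_right (one_pos.trans_le hc) hη0.le
  refine success_le_half_add_of_sum_sub_le hN hgmeas hg ?_
  calc ∑ i, (∫ v, g (a i + v) ∂μ - ∫ v, g (b i + v) ∂μ) ≤ ∑ i, p (a i - b i) / c :=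
        sum_le_sum fun i _ => integral_sub_integral_le_of_expDensity volume
          (weightedLpNorm_add_le hM1 hw) hK.le hc0.le hdens hgmeas hg (a i) (b i)
    _ = (∑ i, p (a i - b i)) / c := (sum_div _ _ _).symm
    _ ≤ 2 * N * η := by
        rw [div_le_iff₀ hc0, mul_assoc]
        nlinarith [sum_weightedLpNorm_sub_le hN hM1 (fun t => (hσ t).le) a b _ hmom]
end

section
/- Define 𝒜(D) = 1 / (Σ_{x ∈ D} x) for a finite set D ⊆ ℝ. There exist constants C > 0 and N₀ such that for every even n ≥ N₀ there exists a dataset 𝒟 ⊆ ℝ with |𝒟| = n for which, with 𝔻 the collection of size-(n/2) subsets of 𝒟: (i) the variance of 𝒜(D) over D drawn uniformly from 𝔻 is at most C, and (ii) there exist adjacent D, D' ∈ 𝔻 with |𝒜(D) − 𝒜(D')| ≥ 2^{n/3}. In other words, the variance σ² of 𝒜 over random half-size subsets is O(1) while its sensitivity Δ = max_{D ∼ D' ∈ 𝔻} |𝒜(D) − 𝒜(D')| is Ω(2^{n/3}). -/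
/-!
Take the powers `1, 2, …, 2 ^ (n - 2)` together with one negative point, chosen so that the
half-size subset made of it and the `n / 2 - 1` smallest powers has the tiny sum
`ε = 1 / (2 ^ (n / 3) + 1)`. Any other half-size subset either contains a larger power, which
outweighs the negative point, or avoids the negative point altogether; in both cases its sum is at
least `1`. Thus `𝒜` is bounded by `1` except on a single subset, where it equals `2 ^ (n / 3) + 1`.
Since `(2 ^ (n / 3) + 1) ^ 2 ≤ binom(n, n / 2)`, whose order is `2 ^ n / √n`, the variance is at most
`2`, while exchanging the negative point for the next power changes `𝒜` by at least
`2 ^ (n / 3)`.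
-/

open Finset

section MeanSquare

variable {ι : Type*} (s : Finset ι) (a : ι → ℝ)

lemma sum_sq_sub_mean :
    ∑ i ∈ s, (a i - (#s : ℝ)⁻¹ * ∑ j ∈ s, a j) ^ 2
      = ∑ i ∈ s, a i ^ 2 - (#s : ℝ)⁻¹ * (∑ j ∈ s, a j) ^ 2 := by
  rcases s.eq_empty_or_nonempty with rfl | hs
  · simp
  have hcard : (#s : ℝ) ≠ 0 := by exact_mod_cast hs.card_pos.ne'
  simp only [sub_sq, sum_add_distrib, sum_sub_distrib, sum_const, nsmul_eq_mul, ← sum_mul,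
    ← mul_sum]
  field_simp
  ring

lemma mean_sq_sub_mean_le_mean_sq :
    (#s : ℝ)⁻¹ * ∑ i ∈ s, (a i - (#s : ℝ)⁻¹ * ∑ j ∈ s, a j) ^ 2
      ≤ (#s : ℝ)⁻¹ * ∑ i ∈ s, a i ^ 2 := by
  rw [sum_sq_sub_mean]
  gcongr
  exact sub_le_self _ (by positivity)

variable {s a}

lemma mean_sq_le_two_of_abs_le_one_of_ne [DecidableEq ι] {i₀ : ι} (hi₀ : i₀ ∈ s)
    (h : ∀ i ∈ s, i ≠ i₀ → |a i| ≤ 1) (hi₀_sq : a i₀ ^ 2 ≤ #s) :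
    (#s : ℝ)⁻¹ * ∑ i ∈ s, a i ^ 2 ≤ 2 := by
  have hcard : (0 : ℝ) < #s := by exact_mod_cast card_pos.2 ⟨i₀, hi₀⟩
  have hrest : ∑ i ∈ s.erase i₀, a i ^ 2 ≤ #s := calc
    ∑ i ∈ s.erase i₀, a i ^ 2 ≤ ∑ i ∈ s.erase i₀, (1 : ℝ) := by
      refine sum_le_sum fun i hi => ?_
      rw [← sq_abs]
      exact pow_le_one₀ (abs_nonneg _) (h i (mem_of_mem_erase hi) (ne_of_mem_erase hi))
    _ ≤ #s := by
      rw [sum_const, nsmul_one]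
      exact_mod_cast card_erase_le
  rw [← add_sum_erase s _ hi₀, inv_mul_le_iff₀ hcard]
  linarith

end MeanSquare

noncomputable def twoPowers (N : ℕ) : Finset ℝ := (range N).image fun i => (2 : ℝ) ^ i

lemma mem_twoPowers {N : ℕ} {x : ℝ} : x ∈ twoPowers N ↔ ∃ i < N, (2 : ℝ) ^ i = x := by
  simp [twoPowers]

lemma card_twoPowers (N : ℕ) : #(twoPowers N) = N := by
  rw [twoPowers, card_image_of_injective _ (pow_right_injective₀ two_pos (by norm_num)),
    card_range]

lemma sum_twoPowers (N : ℕ) : ∑ x ∈ twoPowers N, x = 2 ^ N - 1 := by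
  rw [twoPowers, sum_image fun i _ j _ h => pow_right_injective₀ two_pos (by norm_num) h,
    geom_sum_eq (by norm_num)]
  ring

lemma twoPowers_mono : Monotone twoPowers :=
  fun _ _ h => image_subset_image (range_subset_range.2 h)

lemma one_le_of_mem_twoPowers {N : ℕ} {x : ℝ} (hx : x ∈ twoPowers N) : 1 ≤ x := by
  obtain ⟨i, -, rfl⟩ := mem_twoPowers.1 hx
  exact one_le_pow₀ one_le_two

/-- A `k`-element subset other than `twoPowers k` contains some power `2 ^ j` with `k ≤ j`. -/
lemma two_pow_le_sum_of_subset_twoPowers {k N : ℕ} {E : Finset ℝ} (hE : E ⊆ twoPowers N)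
    (hcard : #E = k) (hne : E ≠ twoPowers k) : (2 : ℝ) ^ k ≤ ∑ x ∈ E, x := by
  obtain ⟨x, hxE, hxk⟩ : ∃ x ∈ E, x ∉ twoPowers k := not_subset.1 fun h =>
    hne (eq_of_subset_of_card_le h (by rw [card_twoPowers, hcard]))
  obtain ⟨j, -, rfl⟩ := mem_twoPowers.1 (hE hxE)
  have hkj : k ≤ j := not_lt.1 fun hj => hxk (mem_twoPowers.2 ⟨j, hj, rfl⟩)
  calc (2 : ℝ) ^ k ≤ 2 ^ j := pow_le_pow_right₀ one_le_two hkj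
    _ ≤ ∑ x ∈ E, x :=
      single_le_sum (fun x hx => zero_le_one.trans (one_le_of_mem_twoPowers (hE hx))) hxE

section SpikedData

variable (ε : ℝ) (k : ℕ)

/-- The point that brings the sum of `twoPowers k` down to `ε`. -/
def spike : ℝ := ε + 1 - 2 ^ k

noncomputable def spikedCore : Finset ℝ := insert (spike ε k) (twoPowers k)

noncomputable def spikedData (N : ℕ) : Finset ℝ := insert (spike ε k) (twoPowers N)

variable {ε k} {N : ℕ}

lemma spike_notMem_twoPowers (hε : ε < 2 ^ k) : spike ε k ∉ twoPowers N := fun h => by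
  have := one_le_of_mem_twoPowers h
  rw [spike] at this
  linarith

lemma card_spikedData (hε : ε < 2 ^ k) : #(spikedData ε k N) = N + 1 := by
  rw [spikedData, card_insert_of_notMem (spike_notMem_twoPowers hε), card_twoPowers]

lemma card_spikedCore (hε : ε < 2 ^ k) : #(spikedCore ε k) = k + 1 := by
  rw [spikedCore, card_insert_of_notMem (spike_notMem_twoPowers hε), card_twoPowers]

lemma sum_spikedCore (hε : ε < 2 ^ k) : ∑ x ∈ spikedCore ε k, x = ε := by
  rw [spikedCore, sum_insert (spike_notMem_twoPowers hε), sum_twoPowers, spike]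
  ring

lemma spikedCore_subset (hkN : k ≤ N) : spikedCore ε k ⊆ spikedData ε k N :=
  insert_subset_insert _ (twoPowers_mono hkN)

lemma twoPowers_subset_spikedData (h : k + 1 ≤ N) : twoPowers (k + 1) ⊆ spikedData ε k N :=
  (twoPowers_mono h).trans (subset_insert _ _)

lemma card_spikedCore_inter_twoPowers (hε : ε < 2 ^ k) :
    #(spikedCore ε k ∩ twoPowers (k + 1)) = k := by
  rw [spikedCore, insert_inter_of_notMem (spike_notMem_twoPowers hε),
    inter_eq_left.2 (twoPowers_mono k.le_succ), card_twoPowers]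

lemma one_le_sum_of_ne_spikedCore (hε₀ : 0 ≤ ε) {D : Finset ℝ}
    (hD : D ⊆ spikedData ε k N) (hcard : #D = k + 1) (hne : D ≠ spikedCore ε k) :
    1 ≤ ∑ x ∈ D, x := by
  by_cases hs : spike ε k ∈ D
  · have hrest : D.erase (spike ε k) ⊆ twoPowers N := fun x hx => by
      have := hD (mem_of_mem_erase hx)
      rwa [spikedData, mem_insert, or_iff_right (ne_of_mem_erase hx)] at this
    have hrest_ne : D.erase (spike ε k) ≠ twoPowers k := fun h => hne (by
      rw [spikedCore, ← h, insert_erase hs])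
    have := two_pow_le_sum_of_subset_twoPowers hrest
      (by rw [card_erase_of_mem hs, hcard, Nat.add_sub_cancel]) hrest_ne
    have hsum := add_sum_erase D (fun x => x) hs
    have hspike : spike ε k = ε + 1 - 2 ^ k := rfl
    linarith
  · have hD' : D ⊆ twoPowers N := fun x hx => by
      have := hD hx
      rwa [spikedData, mem_insert, or_iff_right (ne_of_mem_of_not_mem hx hs)] at this
    obtain ⟨x, hx⟩ : D.Nonempty := card_pos.1 (by omega)
    exact (one_le_of_mem_twoPowers (hD' hx)).trans <|
      single_le_sum (fun y hy => zero_le_one.trans (one_le_of_mem_twoPowers (hD' hy))) hx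

end SpikedData

lemma sixty_four_mul_cube_le_two_pow {n : ℕ} (hn : 20 ≤ n) : 64 * n ^ 3 ≤ 2 ^ n := by
  induction n, hn using Nat.le_induction with
  | base => norm_num
  | succ n hn ih =>
    have : 3 * n ^ 2 + 3 * n + 1 ≤ n ^ 3 := by nlinarith
    calc 64 * (n + 1) ^ 3 ≤ 64 * n ^ 3 * 2 := by nlinarith
      _ ≤ 2 ^ (n + 1) := by rw [pow_succ 2 n]; omega

lemma sq_two_rpow_add_one_le_choose {n : ℕ} (hn : 20 ≤ n) (heven : Even n) :
    ((2 : ℝ) ^ ((n : ℝ) / 3) + 1) ^ 2 ≤ n.choose (n / 2) := by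
  set B : ℝ := 2 ^ ((n : ℝ) / 3)
  have hB : 1 ≤ B := Real.one_le_rpow one_le_two (by positivity)
  have hB3 : B ^ 3 = 2 ^ n := by
    rw [← Real.rpow_mul_natCast zero_le_two, Nat.cast_ofNat, div_mul_cancel₀ _ three_ne_zero,
      Real.rpow_natCast]
  have hnB : 4 * (n : ℝ) ≤ B := by
    refine le_of_pow_le_pow_left₀ three_ne_zero (by positivity) ?_
    rw [hB3]
    exact_mod_cast (by linarith [sixty_four_mul_cube_le_two_pow hn] : (4 * n) ^ 3 ≤ 2 ^ n)
  have hchoose : (2 : ℝ) ^ n ≤ n * n.choose (n / 2) := by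
    obtain ⟨m, rfl⟩ := heven
    have := Nat.four_pow_le_two_mul_self_mul_centralBinom m (by omega)
    rw [Nat.centralBinom_eq_two_mul_choose] at this
    rw [show (m + m) / 2 = m by omega, ← two_mul, pow_mul]
    exact_mod_cast this
  have hn : (0 : ℝ) < n := by positivity
  calc (B + 1) ^ 2 ≤ 4 * B ^ 2 := by nlinarith
    _ ≤ B ^ 3 / n := by rw [le_div_iff₀ hn]; nlinarith
    _ ≤ n.choose (n / 2) := by rw [hB3, div_le_iff₀' hn]; exact hchoose

/-- with `𝒜(D) = 1/(∑_{x ∈ D} x)`, there are constants `C > 0`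
and `N₀` such that for every even `n ≥ N₀` there is a dataset `𝒟 ⊆ ℝ` of size
`n` for which, over the collection `𝔻` of size-`(n/2)` subsets of `𝒟`: (i) the
variance of `𝒜(D)` for `D` uniform on `𝔻` is at most `C`, and (ii) there exist
adjacent `D, D' ∈ 𝔻` with `|𝒜(D) - 𝒜(D')| ≥ 2^{n/3}`. So the variance is
`O(1)` while the sensitivity is `Ω(2^{n/3})`. -/
theorem statement_14 :
    ∃ C : ℝ, 0 < C ∧ ∃ N₀ : ℕ, ∀ n : ℕ, N₀ ≤ n → Even n →
      ∃ 𝒟 : Finset ℝ, 𝒟.card = n ∧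
        -- (i) variance of 𝒜 over uniform D ∈ 𝔻 is at most C
        (((𝒟.powersetCard (n / 2)).card : ℝ)⁻¹ *
            ∑ D ∈ 𝒟.powersetCard (n / 2),
              ((∑ x ∈ D, x)⁻¹ -
                  ((𝒟.powersetCard (n / 2)).card : ℝ)⁻¹ *
                    ∑ D' ∈ 𝒟.powersetCard (n / 2), (∑ x ∈ D', x)⁻¹) ^ 2
          ≤ C) ∧
        -- (ii) an adjacent pair witnessing sensitivity at least 2^{n/3}
        (∃ D ∈ 𝒟.powersetCard (n / 2), ∃ D' ∈ 𝒟.powersetCard (n / 2),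
          (D ∩ D').card = n / 2 - 1 ∧
          (2 : ℝ) ^ ((n : ℝ) / 3) ≤ |(∑ x ∈ D, x)⁻¹ - (∑ x ∈ D', x)⁻¹|) := by
  refine ⟨2, two_pos, 20, fun n hn heven => ?_⟩
  obtain ⟨k, hk⟩ : ∃ k, n / 2 = k + 1 := ⟨n / 2 - 1, by omega⟩
  set B : ℝ := 2 ^ ((n : ℝ) / 3)
  have hB : 0 < B := by positivity
  set ε : ℝ := (B + 1)⁻¹
  have hε₀ : 0 ≤ ε := by positivity
  have hε : ε < 2 ^ k := (inv_lt_one_of_one_lt₀ (by linarith)).trans_le (one_le_pow₀ one_le_two)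
  have hcore : spikedCore ε k ∈ (spikedData ε k (n - 1)).powersetCard (n / 2) :=
    mem_powersetCard.2 ⟨spikedCore_subset (by omega), by rw [card_spikedCore hε, hk]⟩
  have hcore_sum : (∑ x ∈ spikedCore ε k, x)⁻¹ = B + 1 := by rw [sum_spikedCore hε, inv_inv]
  refine ⟨spikedData ε k (n - 1), by rw [card_spikedData hε]; omega, ?_,
    spikedCore ε k, hcore, twoPowers (k + 1),
    mem_powersetCard.2 ⟨twoPowers_subset_spikedData (by omega), by rw [card_twoPowers, hk]⟩,
    by rw [card_spikedCore_inter_twoPowers hε, hk, Nat.add_sub_cancel], ?_⟩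
  · refine (mean_sq_sub_mean_le_mean_sq _ _).trans
      (mean_sq_le_two_of_abs_le_one_of_ne hcore (fun D hD hne => ?_) ?_)
    · obtain ⟨hDsub, hDcard⟩ := mem_powersetCard.1 hD
      have hsum := one_le_sum_of_ne_spikedCore hε₀ hDsub (hDcard.trans hk) hne
      rw [abs_inv, abs_of_pos (by linarith)]
      exact inv_le_one_of_one_le₀ hsum
    · rw [hcore_sum, card_powersetCard, card_spikedData hε, Nat.sub_add_cancel (by omega)]
      exact sq_two_rpow_add_one_le_choose hn heven
  · have hpow : 1 ≤ ∑ x ∈ twoPowers (k + 1), x := by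
      rw [sum_twoPowers, pow_succ]
      linarith [one_le_pow₀ (M₀ := ℝ) one_le_two (n := k)]
    rw [hcore_sum]
    refine le_abs.2 (Or.inl ?_)
    linarith [inv_le_one_of_one_le₀ hpow]
end

section
/- Let n ≥ 4 be even, let p = 1 / C(n, n/2) (the reciprocal of the central binomial coefficient), let A = √p − (2^{n/2 − 1} − 1), and let 𝒟 = {2^i : i = 0, 1, …, n−2} ∪ {A}, a set of n real numbers. Let D* = {2^0, 2^1, …, 2^{n/2 − 2}} ∪ {A}. Then |D*| = n/2, Σ_{x ∈ D*} x = √p (so that 1/Σ_{x ∈ D*} x = C(n, n/2)^{1/2}), and for every other size-(n/2) subset D' ⊆ 𝒟 with D' ≠ D*, the sum Σ_{x ∈ D'} x ≥ 1, hence 0 < 1/Σ_{x ∈ D'} x ≤ 1. -/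
/-!
Write `k = n/2 - 1`, so that `D* = {2^0, …, 2^(k-1), A}` and `A = √p + 1 - 2^k ≤ 0`. Any `k`
distinct powers of two other than the `k` smallest contain some `2^m` with `m ≥ k`, so they sum
to at least `2^k`; hence a `(k+1)`-subset of `𝒟` containing `A`, other than `D*`, sums to at
least `2^k + A = √p + 1`. A subset avoiding `A` consists of powers of two, each at least `1`.
-/

open Finset

theorem pow_le_sum_pow_of_card_eq_of_ne_range {R : Type*} [Semiring R] [PartialOrder R]
    [IsOrderedRing R] {a : R} (ha : 1 ≤ a) {k : ℕ} {T : Finset ℕ} (hcard : #T = k)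
    (hne : T ≠ range k) : a ^ k ≤ ∑ i ∈ T, a ^ i := by
  obtain ⟨m, hmT, hm⟩ : ∃ m ∈ T, m ∉ range k :=
    not_subset.mp fun hsub => hne (eq_of_subset_of_card_le hsub (by simp [hcard]))
  calc a ^ k ≤ a ^ m := pow_le_pow_right₀ ha (by simpa using hm)
    _ ≤ ∑ i ∈ T, a ^ i := single_le_sum (fun i _ => pow_nonneg (zero_le_one.trans ha) i) hmT

section PowersOfTwo

variable {A : ℝ}

lemma two_pow_injective : Function.Injective fun i : ℕ => (2 : ℝ) ^ i :=
  pow_right_injective₀ two_pos (by norm_num)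

lemma disjoint_image_two_pow_singleton (hA : ∀ i : ℕ, (2 : ℝ) ^ i ≠ A) (s : Finset ℕ) :
    Disjoint (s.image fun i => (2 : ℝ) ^ i) {A} := by
  simpa [disjoint_singleton_right] using fun i _ => hA i

lemma card_image_two_pow_union (hA : ∀ i : ℕ, (2 : ℝ) ^ i ≠ A) (s : Finset ℕ) :
    #((s.image fun i => (2 : ℝ) ^ i) ∪ {A}) = #s + 1 := by
  rw [card_union_of_disjoint (disjoint_image_two_pow_singleton hA s),
    card_image_of_injective _ two_pow_injective, card_singleton]

lemma sum_image_two_pow_union (hA : ∀ i : ℕ, (2 : ℝ) ^ i ≠ A) (s : Finset ℕ) :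
    ∑ x ∈ (s.image fun i => (2 : ℝ) ^ i) ∪ {A}, x = ∑ i ∈ s, (2 : ℝ) ^ i + A := by
  rw [sum_union (disjoint_image_two_pow_singleton hA s),
    sum_image fun _ _ _ _ h => two_pow_injective h, sum_singleton]

lemma one_le_sum_of_subset_image_two_pow {D : Finset ℝ} {s : Finset ℕ}
    (hD : D ⊆ s.image fun i => (2 : ℝ) ^ i) (hne : D.Nonempty) : 1 ≤ ∑ x ∈ D, x := by
  have hge : ∀ x ∈ D, 1 ≤ x := fun x hx => by
    obtain ⟨i, -, rfl⟩ := mem_image.mp (hD hx)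
    exact one_le_pow₀ one_le_two
  obtain ⟨x, hx⟩ := hne
  exact (hge x hx).trans (single_le_sum (fun y hy => zero_le_one.trans (hge y hy)) hx)

lemma two_pow_add_le_sum (hA : ∀ i : ℕ, (2 : ℝ) ^ i ≠ A) {D : Finset ℝ} {s : Finset ℕ}
    {k : ℕ} (hD : D ⊆ (s.image fun i => (2 : ℝ) ^ i) ∪ {A}) (hAD : A ∈ D)
    (hcard : #D = k + 1) (hne : D ≠ ((range k).image fun i => (2 : ℝ) ^ i) ∪ {A}) :
    2 ^ k + A ≤ ∑ x ∈ D, x := by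
  rw [union_singleton, subset_insert_iff, subset_image_iff] at hD
  obtain ⟨T, -, hT⟩ := hD
  have hDT : D = (T.image fun i => (2 : ℝ) ^ i) ∪ {A} := by
    rw [hT, union_singleton, insert_erase hAD]
  rw [hDT, card_image_two_pow_union hA, add_left_inj] at hcard
  have hTne : T ≠ range k := by rintro rfl; exact hne hDT
  rw [hDT, sum_image_two_pow_union hA, add_le_add_iff_right]
  exact pow_le_sum_pow_of_card_eq_of_ne_range one_le_two hcard hTne

end PowersOfTwo

theorem statement_15_general (n : ℕ) (hn : 4 ≤ n) :
    let p : ℝ := 1 / (n.choose (n / 2) : ℝ)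
    let A : ℝ := Real.sqrt p - ((2 : ℝ) ^ (n / 2 - 1) - 1)
    let 𝒟 : Finset ℝ := (Finset.range (n - 1)).image (fun i => (2 : ℝ) ^ i) ∪ {A}
    let Dstar : Finset ℝ := (Finset.range (n / 2 - 1)).image (fun i => (2 : ℝ) ^ i) ∪ {A}
    𝒟.card = n ∧
    Dstar.card = n / 2 ∧
    Dstar ⊆ 𝒟 ∧
    (∑ x ∈ Dstar, x) = Real.sqrt p ∧
    (∑ x ∈ Dstar, x)⁻¹ = Real.sqrt (n.choose (n / 2) : ℝ) ∧
    ∀ D' ∈ 𝒟.powersetCard (n / 2), D' ≠ Dstar →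
      1 ≤ (∑ x ∈ D', x) ∧ 0 < (∑ x ∈ D', x)⁻¹ ∧ (∑ x ∈ D', x)⁻¹ ≤ 1 := by
  intro p A 𝒟 Dstar
  have hsqrt : Real.sqrt p ≤ 1 := Real.sqrt_le_one.mpr <| div_le_one_of_le₀
    (by exact_mod_cast Nat.choose_pos (Nat.div_le_self n 2)) (Nat.cast_nonneg _)
  have hA : ∀ i : ℕ, (2 : ℝ) ^ i ≠ A := fun i h => by
    have : (2 : ℝ) ≤ 2 ^ (n / 2 - 1) := le_self_pow₀ one_le_two (by omega)
    have : (0 : ℝ) < 2 ^ i := by positivity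
    linarith
  have hsum : ∑ x ∈ Dstar, x = Real.sqrt p := by
    rw [sum_image_two_pow_union hA, geom_sum_eq (by norm_num : (2 : ℝ) ≠ 1)]
    norm_num [A]
  refine ⟨?_, ?_, ?_, hsum, ?_, ?_⟩
  · rw [card_image_two_pow_union hA, card_range]; omega
  · rw [card_image_two_pow_union hA, card_range]; omega
  · exact union_subset_union_left (image_subset_image (range_subset_range.mpr (by omega)))
  · rw [hsum, show p = (n.choose (n / 2) : ℝ)⁻¹ from one_div _, Real.sqrt_inv, inv_inv]
  intro D' hD' hne
  obtain ⟨hsub, hcard⟩ := mem_powersetCard.mp hD'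
  have hone : 1 ≤ ∑ x ∈ D', x := by
    by_cases hAD : A ∈ D'
    · have := two_pow_add_le_sum hA hsub hAD (k := n / 2 - 1) (by omega) hne
      linarith [Real.sqrt_nonneg p]
    · simp only [𝒟, union_singleton, subset_insert_iff_of_notMem hAD] at hsub
      exact one_le_sum_of_subset_image_two_pow hsub (card_pos.mp (by omega))
  exact ⟨hone, inv_pos.mpr (zero_lt_one.trans_le hone), inv_le_one_of_one_le₀ hone⟩

/-- for even `n ≥ 4`, with `p = 1/C(n, n/2)`,
`A = √p - (2^{n/2-1} - 1)`, `𝒟 = {2^i : 0 ≤ i ≤ n-2} ∪ {A}` (a set of `n`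
reals) and `D* = {2^0, …, 2^{n/2-2}} ∪ {A}`, we have `|D*| = n/2`,
`∑_{x ∈ D*} x = √p` (so `1/∑_{x ∈ D*} x = C(n, n/2)^{1/2}`), and every other
size-`(n/2)` subset `D' ⊆ 𝒟` has `∑_{x ∈ D'} x ≥ 1`, hence
`0 < 1/∑_{x ∈ D'} x ≤ 1`. -/
theorem statement_15 (n : ℕ) (hn : 4 ≤ n) (hev : Even n) :
    let p : ℝ := 1 / (n.choose (n / 2) : ℝ)
    let A : ℝ := Real.sqrt p - ((2 : ℝ) ^ (n / 2 - 1) - 1)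
    let 𝒟 : Finset ℝ := (Finset.range (n - 1)).image (fun i => (2 : ℝ) ^ i) ∪ {A}
    let Dstar : Finset ℝ := (Finset.range (n / 2 - 1)).image (fun i => (2 : ℝ) ^ i) ∪ {A}
    𝒟.card = n ∧
    Dstar.card = n / 2 ∧
    Dstar ⊆ 𝒟 ∧
    (∑ x ∈ Dstar, x) = Real.sqrt p ∧
    (∑ x ∈ Dstar, x)⁻¹ = Real.sqrt (n.choose (n / 2) : ℝ) ∧
    ∀ D' ∈ 𝒟.powersetCard (n / 2), D' ≠ Dstar →
      1 ≤ (∑ x ∈ D', x) ∧ 0 < (∑ x ∈ D', x)⁻¹ ∧ (∑ x ∈ D', x)⁻¹ ≤ 1 :=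
  statement_15_general n hn
end

section
/- Let 𝒟 be a finite set with |𝒟| = n ≥ 2 and let 1 ≤ k ≤ n−1. For p ∈ (0,1], let 𝒜_p be the randomized algorithm which, on input a size-k subset D ⊆ 𝒟, outputs the random subset S ⊆ D obtained by including each element of D independently with probability p. Then for every η > 0 there exists p₀ > 0 such that for all 0 < p ≤ p₀, the algorithm 𝒜_p is η-MIP with respect to 𝒟: for every x* ∈ 𝒟 and every identification algorithm ℐ, P(ℐ(x*, 𝒜_p(D_train)) = y*) ≤ max{k/n, 1 − k/n} + η. -/
/-!
With probability `(1 - p) ^ k` the mechanism releases `∅`, which carries no information about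
`D_train`. On that event an adversary answering `1` with probability `t` succeeds with
probability `a t + (1 - a) (1 - t) ≤ max a (1 - a)`, where `a = k / n` is the chance that
`x* ∈ D_train`; the complementary event has probability `1 - (1 - p) ^ k ≤ k p`, so
`p₀ = min (η / k) 1` works.
-/

open Finset

lemma sum_mul_le_weight_mul_add_one_sub_weight {ι : Type*} {s : Finset ι} {w g : ι → ℝ}
    (hw : ∀ i ∈ s, 0 ≤ w i) (hw1 : ∑ i ∈ s, w i = 1) (hg : ∀ i ∈ s, g i ≤ 1)
    {a : ι} (ha : a ∈ s) :
    ∑ i ∈ s, w i * g i ≤ w a * g a + (1 - w a) := by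
  classical
  have hrest : ∑ i ∈ s.erase a, w i * g i ≤ ∑ i ∈ s.erase a, w i :=
    sum_le_sum fun i hi ↦
      mul_le_of_le_one_right (hw i (mem_of_mem_erase hi)) (hg i (mem_of_mem_erase hi))
  rw [← add_sum_erase s _ ha] at hw1 ⊢
  linarith

lemma one_sub_one_sub_pow_le_mul {p : ℝ} (hp : p ≤ 2) (k : ℕ) :
    1 - (1 - p) ^ k ≤ k * p := by
  have := one_add_mul_le_pow (show -2 ≤ -p by linarith) k
  rw [← sub_eq_add_neg] at this
  linarith

lemma mul_add_one_sub_mul_one_sub_le_max (a : ℝ) {t : ℝ} (ht0 : 0 ≤ t) (ht1 : t ≤ 1) :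
    a * t + (1 - a) * (1 - t) ≤ max a (1 - a) := by
  have h₁ : a * t ≤ max a (1 - a) * t := mul_le_mul_of_nonneg_right (le_max_left _ _) ht0
  have h₂ : (1 - a) * (1 - t) ≤ max a (1 - a) * (1 - t) :=
    mul_le_mul_of_nonneg_right (le_max_right _ _) (by linarith)
  linarith

section SubsetRelease

variable {α : Type*} [DecidableEq α]

lemma card_mul_card_filter_mem_powersetCard {𝒟 : Finset α} {x : α} (hx : x ∈ 𝒟) {k : ℕ}
    (hk : 1 ≤ k) :
    #𝒟 * #{D ∈ 𝒟.powersetCard k | x ∈ D} = k * #(𝒟.powersetCard k) := by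
  have h := card_filter_powersetCard_subset {x} 𝒟 k (singleton_subset_iff.mpr hx) hk
  simp only [singleton_subset_iff, card_singleton] at h
  rw [h, card_powersetCard]
  obtain ⟨m, hm⟩ : ∃ m, #𝒟 = m + 1 := Nat.exists_eq_add_one.mpr (card_pos.mpr ⟨x, hx⟩)
  obtain ⟨j, rfl⟩ : ∃ j, k = j + 1 := Nat.exists_eq_add_one.mpr hk
  rw [hm]
  simpa [mul_comm] using Nat.add_one_mul_choose_eq m j

lemma inv_card_mul_sum_ite_mem_powersetCard {𝒟 : Finset α} {x : α} (hx : x ∈ 𝒟) {k : ℕ}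
    (hk1 : 1 ≤ k) (hk2 : k ≤ #𝒟) (u v : ℝ) :
    (#(𝒟.powersetCard k) : ℝ)⁻¹ * ∑ D ∈ 𝒟.powersetCard k, (if x ∈ D then u else v)
      = k / #𝒟 * u + (1 - k / #𝒟) * v := by
  have hC : (0 : ℝ) < #(𝒟.powersetCard k) := by
    rw [card_powersetCard]; exact_mod_cast Nat.choose_pos hk2
  have hn : (0 : ℝ) < #𝒟 := by exact_mod_cast card_pos.mpr ⟨x, hx⟩
  have hcount :
      (#𝒟 : ℝ) * #{D ∈ 𝒟.powersetCard k | x ∈ D} = k * #(𝒟.powersetCard k) :=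
    mod_cast card_mul_card_filter_mem_powersetCard hx hk1
  have hsplit :
      (#{D ∈ 𝒟.powersetCard k | x ∈ D} : ℝ) + #{D ∈ 𝒟.powersetCard k | x ∉ D}
        = #(𝒟.powersetCard k) :=
    mod_cast card_filter_add_card_filter_not (s := 𝒟.powersetCard k) (fun D ↦ x ∈ D)
  rw [sum_ite, sum_const, sum_const, nsmul_eq_mul, nsmul_eq_mul]
  field_simp
  linear_combination (u - v) * hcount + #𝒟 * v * hsplit

/-- `subsetRelease p D S` is the probability that `𝒜_p` outputs `S` on input `D`. -/
def subsetRelease (p : ℝ) (D S : Finset α) : ℝ :=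
  if S ⊆ D then p ^ #S * (1 - p) ^ (#D - #S) else 0

lemma subsetRelease_nonneg {p : ℝ} (hp0 : 0 ≤ p) (hp1 : p ≤ 1) (D S : Finset α) :
    0 ≤ subsetRelease p D S := by
  unfold subsetRelease
  split_ifs
  · exact mul_nonneg (pow_nonneg hp0 _) (pow_nonneg (sub_nonneg.mpr hp1) _)
  · exact le_rfl

lemma subsetRelease_empty (p : ℝ) (D : Finset α) : subsetRelease p D ∅ = (1 - p) ^ #D := by
  simp [subsetRelease]

lemma sum_powerset_subsetRelease (p : ℝ) {D 𝒟 : Finset α} (hD : D ⊆ 𝒟) :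
    ∑ S ∈ 𝒟.powerset, subsetRelease p D S = 1 := by
  unfold subsetRelease
  rw [← sum_subset (powerset_mono.mpr hD) fun S _ hS ↦ if_neg (mt mem_powerset.mpr hS),
    sum_congr rfl fun S hS ↦ if_pos (mem_powerset.mp hS), sum_pow_mul_eq_add_pow]
  simp

lemma sum_subsetRelease_mul_le {p : ℝ} (hp0 : 0 ≤ p) (hp1 : p ≤ 1) {D 𝒟 : Finset α}
    (hD : D ⊆ 𝒟) {g : Finset α → ℝ} (hg : ∀ S, g S ≤ 1) :
    ∑ S ∈ 𝒟.powerset, subsetRelease p D S * g S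
      ≤ (1 - p) ^ #D * g ∅ + (1 - (1 - p) ^ #D) := by
  rw [← subsetRelease_empty]
  exact sum_mul_le_weight_mul_add_one_sub_weight (fun S _ ↦ subsetRelease_nonneg hp0 hp1 D S)
    (sum_powerset_subsetRelease p hD) (fun S _ ↦ hg S) (empty_mem_powerset 𝒟)

lemma inv_card_mul_sum_sum_subsetRelease_mul_le {p : ℝ} (hp0 : 0 ≤ p) (hp1 : p ≤ 1)
    {𝒟 : Finset α} {x : α} (hx : x ∈ 𝒟) {k : ℕ} (hk1 : 1 ≤ k) (hk2 : k ≤ #𝒟)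
    {ℐ : Finset α → ℝ} (hℐ : ∀ S, ℐ S ∈ Set.Icc (0 : ℝ) 1) :
    (#(𝒟.powersetCard k) : ℝ)⁻¹ * ∑ D ∈ 𝒟.powersetCard k, ∑ S ∈ 𝒟.powerset,
        subsetRelease p D S * (if x ∈ D then ℐ S else 1 - ℐ S)
      ≤ max ((k : ℝ) / #𝒟) (1 - k / #𝒟) + (1 - (1 - p) ^ k) := by
  set q := (1 - p) ^ k
  set a : ℝ := k / #𝒟
  have hq0 : 0 ≤ q := pow_nonneg (by linarith) k
  have hq1 : q ≤ 1 := pow_le_one₀ (by linarith) (by linarith)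
  have hbound : ∀ D ∈ 𝒟.powersetCard k,
      ∑ S ∈ 𝒟.powerset, subsetRelease p D S * (if x ∈ D then ℐ S else 1 - ℐ S)
        ≤ if x ∈ D then q * ℐ ∅ + (1 - q) else q * (1 - ℐ ∅) + (1 - q) := by
    intro D hD
    obtain ⟨hD𝒟, hDk⟩ := mem_powersetCard.mp hD
    have := sum_subsetRelease_mul_le hp0 hp1 hD𝒟
      (g := fun S ↦ if x ∈ D then ℐ S else 1 - ℐ S)
      fun S ↦ by split_ifs <;> linarith [(hℐ S).1, (hℐ S).2]
    simpa only [hDk, mul_ite, ite_add] using this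
  have hguess := mul_add_one_sub_mul_one_sub_le_max a (hℐ ∅).1 (hℐ ∅).2
  have hempty : q * (a * ℐ ∅ + (1 - a) * (1 - ℐ ∅)) ≤ max a (1 - a) :=
    (mul_le_mul_of_nonneg_left hguess hq0).trans
      (mul_le_of_le_one_left (by linarith [le_max_left a (1 - a), le_max_right a (1 - a)]) hq1)
  calc _ ≤ (#(𝒟.powersetCard k) : ℝ)⁻¹ * ∑ D ∈ 𝒟.powersetCard k,
          (if x ∈ D then q * ℐ ∅ + (1 - q) else q * (1 - ℐ ∅) + (1 - q)) := by
        gcongr with D hD; exact hbound D hD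
    _ = q * (a * ℐ ∅ + (1 - a) * (1 - ℐ ∅)) + (1 - q) := by
        rw [inv_card_mul_sum_ite_mem_powersetCard hx hk1 hk2]; ring
    _ ≤ max a (1 - a) + (1 - q) := by linarith

end SubsetRelease

theorem statement_17_general {α : Type*} [DecidableEq α]
    (n k : ℕ) (hk1 : 1 ≤ k) (hk2 : k ≤ n - 1)
    (𝒟 : Finset α) (hcard : 𝒟.card = n)
    (𝒜 : ℝ → Finset α → Finset α → ℝ)
    (h𝒜 : ∀ p D S, 𝒜 p D S =
      if S ⊆ D then p ^ S.card * (1 - p) ^ (D.card - S.card) else 0)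
    (η : ℝ) (hη : 0 < η) :
    ∃ p₀ : ℝ, 0 < p₀ ∧ ∀ p : ℝ, 0 < p → p ≤ p₀ →
      ∀ x ∈ 𝒟, ∀ ℐ : Finset α → ℝ, (∀ S, ℐ S ∈ Set.Icc (0 : ℝ) 1) →
        ((𝒟.powersetCard k).card : ℝ)⁻¹ *
            (∑ D ∈ 𝒟.powersetCard k, ∑ S ∈ 𝒟.powerset,
              𝒜 p D S * (if x ∈ D then ℐ S else 1 - ℐ S))
          ≤ max ((k : ℝ) / n) (1 - (k : ℝ) / n) + η := by
  obtain rfl : 𝒜 = subsetRelease := by ext p D S; exact h𝒜 p D S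
  subst hcard
  have hk : (0 : ℝ) < k := by exact_mod_cast hk1
  refine ⟨min (η / k) 1, lt_min (div_pos hη hk) one_pos, fun p hp hp₀ x hx ℐ hℐ ↦ ?_⟩
  have hp1 : p ≤ 1 := hp₀.trans (min_le_right _ _)
  have hpη : k * p ≤ η := (le_div_iff₀' hk).mp (hp₀.trans (min_le_left _ _))
  linarith [inv_card_mul_sum_sum_subsetRelease_mul_le hp.le hp1 hx hk1 (by omega) hℐ,
    one_sub_one_sub_pow_le_mul (show p ≤ 2 by linarith) k]

/-- let `|𝒟| = n ≥ 2` and `1 ≤ k ≤ n-1`. For `p ∈ (0,1]`, let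
`𝒜_p` be the subset-release algorithm: on a size-`k` subset `D ⊆ 𝒟` it outputs
`S ⊆ D` with probability `p^{|S|}(1-p)^{|D|-|S|}`. Then for every `η > 0`
there is `p₀ > 0` such that for all `0 < p ≤ p₀`, `𝒜_p` is `η`-MIP with
respect to `𝒟`: for every `x* ∈ 𝒟` and every identification algorithm `ℐ`,
`P(ℐ(x*, 𝒜_p(D_train)) = y*) ≤ max{k/n, 1 - k/n} + η`. -/
theorem statement_17 {α : Type*} [DecidableEq α]
    (n k : ℕ) (hn : 2 ≤ n) (hk1 : 1 ≤ k) (hk2 : k ≤ n - 1)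
    (𝒟 : Finset α) (hcard : 𝒟.card = n)
    (𝒜 : ℝ → Finset α → Finset α → ℝ)
    (h𝒜 : ∀ p D S, 𝒜 p D S =
      if S ⊆ D then p ^ S.card * (1 - p) ^ (D.card - S.card) else 0)
    (η : ℝ) (hη : 0 < η) :
    ∃ p₀ : ℝ, 0 < p₀ ∧ ∀ p : ℝ, 0 < p → p ≤ p₀ →
      ∀ x ∈ 𝒟, ∀ ℐ : Finset α → ℝ, (∀ S, ℐ S ∈ Set.Icc (0 : ℝ) 1) →
        ((𝒟.powersetCard k).card : ℝ)⁻¹ *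
            (∑ D ∈ 𝒟.powersetCard k, ∑ S ∈ 𝒟.powerset,
              𝒜 p D S * (if x ∈ D then ℐ S else 1 - ℐ S))
          ≤ max ((k : ℝ) / n) (1 - (k : ℝ) / n) + η :=
  statement_17_general n k hk1 hk2 𝒟 hcard 𝒜 h𝒜 η hη
end
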